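/- arXiv:2210.01948 — 12 statements merged into one kernel-verified Lean document; each statement's English description precedes it below -/
import Mathlib

section
/- Equivalence of uniform and stopped error control (Lemma 3 of Howard et al.): let ψ = (ψ_t)_{t∈ℕ} be an adapted, pointwise nondecreasing process taking values in {0,1}, and let α ∈ (0,1). Then P(∃ t ∈ ℕ, ψ_t = 1) ≤ α if and only if P(ψ_τ = 1) ≤ α for every stopping time τ (possibly taking the value ∞), where ψ_∞ := sup_{t∈ℕ} ψ_t. -/
open MeasureTheory Filter
open scoped ENNReal

/-!
Stopping at any `τ` can only reject on the event `∃ t, ψ t = 1`, which gives one direction.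
Conversely, the constant stopping time `τ = ∞` stops at `ψ_∞ = ⨆ t, ψ t`, and for a
`{0,1}`-valued process `ψ_∞ = 1` is exactly the event `∃ t, ψ t = 1`.
-/

lemma Nat.iSup_eq_one_iff_exists {ι : Sort*} {f : ι → ℕ} (hf : ∀ i, f i ≤ 1) :
    (⨆ i, f i) = 1 ↔ ∃ i, f i = 1 := by
  constructor
  · intro hsup
    by_contra! hne
    have hsup_le : (⨆ i, f i) ≤ 0 := ciSup_le' fun i => by have := hf i; have := hne i; omega
    omega
  · rintro ⟨i, hi⟩
    exact le_antisymm (ciSup_le' hf) (hi ▸ le_ciSup ⟨1, Set.forall_mem_range.2 hf⟩ i)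

theorem uniform_iff_stopped_error_control_general
    {Ω : Type*} {m0 : MeasurableSpace Ω} {P : Measure Ω}
    {ℱ : Filtration ℕ m0} (ψ : ℕ → Ω → ℕ)
    (h01 : ∀ t ω, ψ t ω = 0 ∨ ψ t ω = 1)
    {α : ℝ} :
    P {ω | ∃ t : ℕ, ψ t ω = 1} ≤ ENNReal.ofReal α ↔
      ∀ τ : Ω → ℕ∞, (∀ t : ℕ, MeasurableSet[ℱ t] {ω | τ ω ≤ (t : ℕ∞)}) →
        P {ω | (if τ ω = ⊤ then ⨆ t : ℕ, ψ t ω else ψ (τ ω).toNat ω) = 1}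
          ≤ ENNReal.ofReal α := by
  have hle : ∀ ω t, ψ t ω ≤ 1 := fun ω t => by rcases h01 t ω with h | h <;> omega
  have hsup : ∀ ω, (⨆ t, ψ t ω) = 1 ↔ ∃ t, ψ t ω = 1 :=
    fun ω => Nat.iSup_eq_one_iff_exists (hle ω)
  constructor
  · intro h τ _
    refine le_trans (measure_mono fun ω hω => ?_) h
    simp only [Set.mem_ofPred_eq] at hω ⊢
    split_ifs at hω
    · exact (hsup ω).1 hω
    · exact ⟨_, hω⟩
  · intro h
    simpa [hsup] using h (fun _ => ⊤) fun t => by simp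

/-- **Equivalence of uniform and stopped error control** (Lemma 3 of Howard et al.):
for an adapted, pointwise nondecreasing `{0,1}`-valued process `ψ` and `α ∈ (0,1)`,
`P(∃ t, ψ t = 1) ≤ α` iff `P(ψ_τ = 1) ≤ α` for every (possibly infinite) stopping
time `τ`, where `ψ_∞ := ⨆ t, ψ t`. -/
theorem uniform_iff_stopped_error_control
    {Ω : Type*} {m0 : MeasurableSpace Ω} {P : Measure Ω} [IsProbabilityMeasure P]
    {ℱ : Filtration ℕ m0} (ψ : ℕ → Ω → ℕ)
    (h01 : ∀ t ω, ψ t ω = 0 ∨ ψ t ω = 1)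
    (hadp : ∀ t, Measurable[ℱ t] (ψ t))
    (hmono : ∀ ω, Monotone fun t => ψ t ω)
    {α : ℝ} (hα : α ∈ Set.Ioo (0:ℝ) 1) :
    P {ω | ∃ t : ℕ, ψ t ω = 1} ≤ ENNReal.ofReal α ↔
      ∀ τ : Ω → ℕ∞, (∀ t : ℕ, MeasurableSet[ℱ t] {ω | τ ω ≤ (t : ℕ∞)}) →
        P {ω | (if τ ω = ⊤ then ⨆ t : ℕ, ψ t ω else ψ (τ ω).toNat ω) = 1}
          ≤ ENNReal.ofReal α :=
  uniform_iff_stopped_error_control_general ψ h01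
end

section
/- Universal inference yields an e-process: let (𝓕_t)_{t∈ℕ} be a filtration on (Ω, 𝓕), let 𝐏 be a countable set of probability measures, and let Q be a probability measure such that Q restricted to 𝓕_t is absolutely continuous with respect to P restricted to 𝓕_t for every P ∈ 𝐏 and every t. Define E_t := inf_{P∈𝐏} d(Q|𝓕_t)/d(P|𝓕_t), the pointwise infimum of the Radon–Nikodym derivatives. Then for every P ∈ 𝐏 and every stopping time τ (possibly infinite, with E_∞ := lim inf_{t→∞} E_t on {τ = ∞}), E_P[E_τ] ≤ 1. -/
/-!
Each `E t` is dominated by the single likelihood ratio `L t = d(Q|ℱ t)/d(P|ℱ t)`, which satisfies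
`∫_A L t dP = Q A` for every `A ∈ ℱ t`. Splitting according to the value of `τ`, the integral of
`L τ` over `{τ < ∞}` is `∑ t, Q {τ = t} = Q {τ < ∞}`, while by Fatou the integral of `liminf L t`
over `{τ = ∞}` is at most `lim Q {t < τ} = Q {τ = ∞}`. Hence `E_P[E_τ] ≤ Q Ω = 1`.
-/

open MeasureTheory Filter
open scoped ENNReal Topology

namespace MeasureTheory

lemma Measure.setLIntegral_rnDeriv_trim {α : Type*} {m m0 : MeasurableSpace α} (hm : m ≤ m0)
    {μ ν : Measure α} [(μ.trim hm).HaveLebesgueDecomposition (ν.trim hm)]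
    (hμν : μ.trim hm ≪ ν.trim hm) {s : Set α} (hs : MeasurableSet[m] s) :
    ∫⁻ x in s, (μ.trim hm).rnDeriv (ν.trim hm) x ∂ν = μ s := by
  rw [← setLIntegral_trim hm (Measure.measurable_rnDeriv _ _) hs,
    Measure.setLIntegral_rnDeriv' hμν hs, trim_measurableSet_eq hm hs]

end MeasureTheory

noncomputable def liminfStoppedValue {Ω : Type*} (X : ℕ → Ω → ℝ≥0∞) (τ : Ω → ℕ∞) (ω : Ω) : ℝ≥0∞ :=
  if τ ω = ⊤ then liminf (fun t => X t ω) atTop else X (τ ω).toNat ω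

section LiminfStoppedValue

variable {Ω : Type*} {X Y : ℕ → Ω → ℝ≥0∞} {τ : Ω → ℕ∞} {ω : Ω}

lemma liminfStoppedValue_of_eq_top (h : τ ω = ⊤) :
    liminfStoppedValue X τ ω = liminf (fun t => X t ω) atTop := if_pos h

lemma liminfStoppedValue_of_eq_coe {t : ℕ} (h : τ ω = t) :
    liminfStoppedValue X τ ω = X t ω := by
  simp [liminfStoppedValue, h]

lemma liminfStoppedValue_mono (h : ∀ t ω, X t ω ≤ Y t ω) (ω : Ω) :
    liminfStoppedValue X τ ω ≤ liminfStoppedValue Y τ ω := by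
  unfold liminfStoppedValue
  split_ifs
  · exact liminf_le_liminf (.of_forall fun t => h t ω)
  · exact h _ ω

variable {m0 : MeasurableSpace Ω} {ℱ : Filtration ℕ m0} {P Q : Measure Ω}

lemma setLIntegral_liminfStoppedValue_ne_top (hτ : IsStoppingTime ℱ τ)
    (hXQ : ∀ t s, MeasurableSet[ℱ t] s → ∫⁻ ω in s, X t ω ∂P = Q s) :
    ∫⁻ ω in {ω | τ ω ≠ ⊤}, liminfStoppedValue X τ ω ∂P = Q {ω | τ ω ≠ ⊤} := by
  have hunion : {ω | τ ω ≠ ⊤} = ⋃ t : ℕ, {ω | τ ω = t} := by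
    ext ω
    simp only [Set.mem_ofPred_eq, Set.mem_iUnion, ENat.ne_top_iff_exists, eq_comm]
  have hdisj : Pairwise (Function.onFun Disjoint fun t : ℕ => {ω | τ ω = t}) := fun i j hij =>
    Set.disjoint_left.2 fun ω hi hj => hij (by simpa using hi.symm.trans hj)
  have hmeas (t : ℕ) : MeasurableSet {ω | τ ω = t} := ℱ.le t _ (hτ.measurableSet_eq t)
  rw [hunion, lintegral_iUnion hmeas hdisj, measure_iUnion hdisj hmeas]
  refine tsum_congr fun t => ?_
  rw [setLIntegral_congr_fun (hmeas t) fun ω hω => liminfStoppedValue_of_eq_coe hω]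
  exact hXQ t _ (hτ.measurableSet_eq t)

lemma MeasureTheory.IsStoppingTime.tendsto_measure_coe_lt [IsFiniteMeasure Q]
    (hτ : IsStoppingTime ℱ τ) :
    Tendsto (fun t : ℕ => Q {ω | (t : ℕ∞) < τ ω}) atTop (𝓝 (Q {ω | τ ω = ⊤})) := by
  have hinter : ⋂ t : ℕ, {ω | (t : ℕ∞) < τ ω} = {ω | τ ω = ⊤} := by
    ext ω
    simp only [Set.mem_iInter, Set.mem_ofPred_eq]
    exact ENat.eq_top_iff_forall_gt.symm
  rw [← hinter]
  exact tendsto_measure_iInter_atTop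
    (fun t => (ℱ.le t _ (hτ.measurableSet_gt t)).nullMeasurableSet)
    (fun i j hij => Set.ofPred_subset_ofPred.2 fun ω => lt_of_le_of_lt (by exact_mod_cast hij))
    ⟨0, measure_ne_top Q _⟩

lemma setLIntegral_liminfStoppedValue_eq_top_le [IsFiniteMeasure Q] (hτ : IsStoppingTime ℱ τ)
    (hX : ∀ t, Measurable (X t))
    (hXQ : ∀ t s, MeasurableSet[ℱ t] s → ∫⁻ ω in s, X t ω ∂P = Q s) :
    ∫⁻ ω in {ω | τ ω = ⊤}, liminfStoppedValue X τ ω ∂P ≤ Q {ω | τ ω = ⊤} := by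
  have hbound (t : ℕ) : ∫⁻ ω in {ω | τ ω = ⊤}, X t ω ∂P ≤ Q {ω | (t : ℕ∞) < τ ω} := by
    refine (lintegral_mono_set fun ω (hω : τ ω = ⊤) => ?_).trans_eq
      (hXQ t _ (hτ.measurableSet_gt t))
    simp [hω]
  calc ∫⁻ ω in {ω | τ ω = ⊤}, liminfStoppedValue X τ ω ∂P
      = ∫⁻ ω in {ω | τ ω = ⊤}, liminf (fun t => X t ω) atTop ∂P :=
        setLIntegral_congr_fun hτ.measurableSet_eq_top fun ω hω => liminfStoppedValue_of_eq_top hω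
    _ ≤ liminf (fun t => ∫⁻ ω in {ω | τ ω = ⊤}, X t ω ∂P) atTop := lintegral_liminf_le hX
    _ ≤ liminf (fun t : ℕ => Q {ω | (t : ℕ∞) < τ ω}) atTop :=
        liminf_le_liminf (.of_forall hbound)
    _ = Q {ω | τ ω = ⊤} := hτ.tendsto_measure_coe_lt.liminf_eq

lemma lintegral_liminfStoppedValue_le [IsFiniteMeasure Q] (hτ : IsStoppingTime ℱ τ)
    (hX : ∀ t, Measurable (X t))
    (hXQ : ∀ t s, MeasurableSet[ℱ t] s → ∫⁻ ω in s, X t ω ∂P = Q s) :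
    ∫⁻ ω, liminfStoppedValue X τ ω ∂P ≤ Q Set.univ := by
  rw [← lintegral_add_compl _ hτ.measurableSet_eq_top,
    ← measure_add_measure_compl hτ.measurableSet_eq_top]
  exact add_le_add (setLIntegral_liminfStoppedValue_eq_top_le hτ hX hXQ)
    (setLIntegral_liminfStoppedValue_ne_top hτ hXQ).le

end LiminfStoppedValue

theorem universal_inference_eprocess_general
    {Ω : Type*} {m0 : MeasurableSpace Ω} {ℱ : Filtration ℕ m0}
    (Ps : Set (Measure Ω))
    (hprob : ∀ P ∈ Ps, IsProbabilityMeasure P)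
    (Q : Measure Ω) [IsProbabilityMeasure Q]
    (habs : ∀ P ∈ Ps, ∀ t : ℕ, Q.trim (ℱ.le t) ≪ P.trim (ℱ.le t))
    (E : ℕ → Ω → ℝ≥0∞)
    (hE : ∀ t ω, E t ω = ⨅ P ∈ Ps, (Q.trim (ℱ.le t)).rnDeriv (P.trim (ℱ.le t)) ω)
    (P : Measure Ω) (hP : P ∈ Ps)
    (τ : Ω → ℕ∞)
    (hτ : ∀ t : ℕ, MeasurableSet[ℱ t] {ω | τ ω ≤ (t : ℕ∞)}) :
    ∫⁻ ω, (if τ ω = ⊤ then Filter.liminf (fun t => E t ω) Filter.atTop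
           else E (τ ω).toNat ω) ∂P ≤ 1 := by
  have := hprob P hP
  let L t := (Q.trim (ℱ.le t)).rnDeriv (P.trim (ℱ.le t))
  have hEL (t : ℕ) (ω : Ω) : E t ω ≤ L t ω := hE t ω ▸ iInf₂_le P hP
  calc ∫⁻ ω, liminfStoppedValue E τ ω ∂P
      ≤ ∫⁻ ω, liminfStoppedValue L τ ω ∂P := lintegral_mono (liminfStoppedValue_mono hEL)
    _ ≤ Q Set.univ := lintegral_liminfStoppedValue_le hτ
        (fun t => (Measure.measurable_rnDeriv _ _).mono (ℱ.le t) le_rfl)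
        (fun t _ hs => Measure.setLIntegral_rnDeriv_trim (ℱ.le t) (habs P hP t) hs)
    _ = 1 := measure_univ

/-- **Universal inference yields an e-process**: for a countable null `Ps` and an
alternative `Q` whose restrictions are absolutely continuous w.r.t. those of each
`P ∈ Ps`, the pointwise infimum of likelihood-ratio processes
`E t = ⨅ P ∈ Ps, d(Q|ℱ t)/d(P|ℱ t)` satisfies `E_P[E_τ] ≤ 1` for every `P ∈ Ps`
and every (possibly infinite) stopping time `τ`. -/
theorem universal_inference_eprocess
    {Ω : Type*} {m0 : MeasurableSpace Ω} {ℱ : Filtration ℕ m0}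
    (Ps : Set (Measure Ω)) (hcnt : Ps.Countable)
    (hprob : ∀ P ∈ Ps, IsProbabilityMeasure P)
    (Q : Measure Ω) [IsProbabilityMeasure Q]
    (habs : ∀ P ∈ Ps, ∀ t : ℕ, Q.trim (ℱ.le t) ≪ P.trim (ℱ.le t))
    (E : ℕ → Ω → ℝ≥0∞)
    (hE : ∀ t ω, E t ω = ⨅ P ∈ Ps, (Q.trim (ℱ.le t)).rnDeriv (P.trim (ℱ.le t)) ω)
    (P : Measure Ω) (hP : P ∈ Ps)
    (τ : Ω → ℕ∞)
    (hτ : ∀ t : ℕ, MeasurableSet[ℱ t] {ω | τ ω ≤ (t : ℕ∞)}) :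
    ∫⁻ ω, (if τ ω = ⊤ then Filter.liminf (fun t => E t ω) Filter.atTop
           else E (τ ω).toNat ω) ∂P ≤ 1 :=
  universal_inference_eprocess_general Ps hprob Q habs E hE P hP τ hτ
end

section
/- Sub-Gaussian mixture confidence sequence (Darling–Robbins): let (X_t)_{t≥1} be an adapted real-valued process with, for every t ≥ 1 and every λ ∈ ℝ, E[exp(λ(X_t − μ)) | 𝓕_{t−1}] ≤ exp(λ²σ²/2) a.s., where σ > 0 and μ ∈ ℝ. Let Y_t := Σ_{i=1}^t X_i. Then for every ρ > 0 and α ∈ (0,1), P(∃ t ≥ 1 : |Y_t/t − μ| ≥ σ·√( ((tρ² + 1)/(t²ρ²)) · log((tρ² + 1)/α²) )) ≤ α. -/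
/-!
Write `S t = Y t - t μ`. For every `λ`, `exp (λ S t - t λ² σ² / 2)` is a nonnegative
supermartingale started at `1`. Averaging over `λ ~ N(0, ρ²/σ²)` gives the mixture
`(t ρ² + 1)^(-1/2) exp (ρ² S t² / (2 σ² (t ρ² + 1)))`, whose value at any bounded stopping time
has expectation at most `1` (optional stopping for each `λ`, then Tonelli). Ville's maximal
inequality bounds the probability that the mixture ever reaches `1/α` by `α`, and the boundary in
the statement is exactly the level set `{mixture = 1/α}`.
-/

open MeasureTheory Filter Real ProbabilityTheory
open scoped ENNReal NNReal

lemma gaussianPDFReal_mul_exp_neg_mul_sq {v : ℝ≥0} (hv : v ≠ 0) (a : ℝ≥0) (x : ℝ) :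
    gaussianPDFReal 0 v x * exp (-(a * x ^ 2 / 2))
      = (√(1 + a * v))⁻¹ * gaussianPDFReal 0 (v / (1 + a * v)) x := by
  simp only [gaussianPDFReal, NNReal.coe_div, NNReal.coe_add, NNReal.coe_one, NNReal.coe_mul,
    sub_zero]
  rw [mul_div_assoc', sqrt_div (by positivity), mul_assoc, ← exp_add, ← mul_assoc, inv_div,
    ← mul_div_assoc, inv_mul_cancel₀ (by positivity), one_div]
  congr 2
  field_simp
  ring

lemma lintegral_exp_mul_sub_sq_gaussianReal {v : ℝ≥0} (hv : v ≠ 0) (a : ℝ≥0) (s : ℝ) :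
    ∫⁻ x, ENNReal.ofReal (exp (x * s - a * x ^ 2 / 2)) ∂gaussianReal 0 v
      = ENNReal.ofReal ((√(1 + a * v))⁻¹ * exp (v * s ^ 2 / (2 * (1 + a * v)))) := by
  have hv' : v / (1 + a * v) ≠ 0 := by positivity
  -- Completing the square: the Gaussian factor only changes the variance, leaving the moment
  -- generating function of `N(0, v / (1 + a v))`.
  have hdensity (x : ℝ) : gaussianPDF 0 v x * ENNReal.ofReal (exp (x * s - a * x ^ 2 / 2))
      = ENNReal.ofReal (√(1 + a * v))⁻¹
        * (gaussianPDF 0 (v / (1 + a * v)) x * ENNReal.ofReal (exp (s * x))) := by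
    rw [gaussianPDF, gaussianPDF, ← ENNReal.ofReal_mul (gaussianPDFReal_nonneg _ _ _),
      ← ENNReal.ofReal_mul (gaussianPDFReal_nonneg _ _ _), ← ENNReal.ofReal_mul (by positivity),
      sub_eq_add_neg, exp_add, mul_left_comm,
      gaussianPDFReal_mul_exp_neg_mul_sq hv a x, mul_comm s]
    congr 1
    ring
  have hmgf : ∫⁻ x, gaussianPDF 0 (v / (1 + a * v)) x * ENNReal.ofReal (exp (s * x))
      = ENNReal.ofReal (exp (↑(v / (1 + a * v)) * s ^ 2 / 2)) := by
    have h := lintegral_withDensity_eq_lintegral_mul volume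
      (measurable_gaussianPDF 0 (v / (1 + a * v))) (g := fun x => ENNReal.ofReal (exp (s * x)))
      (by fun_prop)
    rw [Pi.mul_def] at h
    rw [← h, ← gaussianReal_of_var_ne_zero 0 hv', ← ofReal_integral_eq_lintegral_ofReal
      (integrable_exp_mul_gaussianReal s) (ae_of_all _ fun _ => (exp_pos _).le)]
    have := congrFun (mgf_id_gaussianReal (μ := 0) (v := v / (1 + a * v))) s
    simp only [mgf, id, zero_mul, zero_add] at this
    rw [this]
  rw [gaussianReal_of_var_ne_zero 0 hv, lintegral_withDensity_eq_lintegral_mul _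
    (measurable_gaussianPDF 0 v) (by fun_prop)]
  simp only [Pi.mul_apply, hdensity]
  rw [lintegral_const_mul _ (by fun_prop), hmgf, ← ENNReal.ofReal_mul (by positivity)]
  simp only [NNReal.coe_div, NNReal.coe_add, NNReal.coe_one, NNReal.coe_mul]
  field_simp

lemma lintegral_exp_sub_gaussianReal_div_sq {σ ρ t : ℝ} (hσ : 0 < σ) (hρ : 0 < ρ) (ht : 0 ≤ t)
    (s : ℝ) :
    ∫⁻ l, ENNReal.ofReal (exp (l * s - t * (l ^ 2 * σ ^ 2 / 2)))
        ∂gaussianReal 0 ((ρ / σ) ^ 2).toNNReal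
      = ENNReal.ofReal
          ((√(t * ρ ^ 2 + 1))⁻¹ * exp (ρ ^ 2 * s ^ 2 / (2 * σ ^ 2 * (t * ρ ^ 2 + 1)))) := by
  have hv : ((ρ / σ) ^ 2).toNNReal ≠ 0 := by
    rw [Ne, Real.toNNReal_eq_zero, not_le]
    positivity
  have hK : 1 + σ ^ 2 * t * (ρ / σ) ^ 2 = t * ρ ^ 2 + 1 := by field_simp; ring
  have h := lintegral_exp_mul_sub_sq_gaussianReal hv (σ ^ 2 * t).toNNReal s
  simp only [Real.coe_toNNReal _ (sq_nonneg _),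
    Real.coe_toNNReal _ (by positivity : 0 ≤ σ ^ 2 * t), hK] at h
  convert h using 4
  · congr 1
    ring
  · field_simp

section CondExp

variable {Ω : Type*} {m m0 : MeasurableSpace Ω} {P : Measure Ω} [IsFiniteMeasure P]
  {f g : Ω → ℝ} {c : ℝ}

lemma integral_mul_le_of_condExp_le_of_le (hm : m ≤ m0) (hf : StronglyMeasurable[m] f)
    (hf0 : 0 ≤ f) {C : ℝ} (hfC : ∀ ω, f ω ≤ C) (hgi : Integrable g P)
    (hc : P[g|m] ≤ᵐ[P] fun _ => c) :
    ∫ ω, f ω * g ω ∂P ≤ c * ∫ ω, f ω ∂P := by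
  have hbound : ∀ᵐ ω ∂P, ‖f ω‖ ≤ C :=
    ae_of_all _ fun ω => (norm_of_nonneg (hf0 ω)).trans_le (hfC ω)
  have hfm : AEStronglyMeasurable f P := (hf.mono hm).aestronglyMeasurable
  calc ∫ ω, f ω * g ω ∂P = ∫ ω, (P[f * g|m]) ω ∂P := (integral_condExp hm).symm
    _ = ∫ ω, f ω * (P[g|m]) ω ∂P :=
      integral_congr_ae (condExp_stronglyMeasurable_mul_of_bound hm hf hgi C hbound)
    _ ≤ ∫ ω, c * f ω ∂P := by
      refine integral_mono_ae (integrable_condExp.bdd_mul hfm hbound)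
        ((Integrable.of_bound hfm C hbound).const_mul c) ?_
      filter_upwards [hc] with ω hω
      rw [mul_comm c]
      exact mul_le_mul_of_nonneg_left hω (hf0 ω)
    _ = c * ∫ ω, f ω ∂P := integral_const_mul c _

lemma integrable_mul_of_condExp_le (hm : m ≤ m0) (hf : StronglyMeasurable[m] f) (hf0 : 0 ≤ f)
    (hfi : Integrable f P) (hg0 : 0 ≤ g) (hgi : Integrable g P) (hc0 : 0 ≤ c)
    (hc : P[g|m] ≤ᵐ[P] fun _ => c) :
    Integrable (f * g) P := by
  set fN : ℕ → Ω → ℝ := fun N ω => min (f ω) N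
  have hfN (N : ℕ) : StronglyMeasurable[m] (fN N) :=
    (hf.measurable.min (@measurable_const ℝ Ω _ m _)).stronglyMeasurable
  have hfN0 (N : ℕ) : 0 ≤ fN N := fun ω => le_min (hf0 ω) N.cast_nonneg
  have hfN_le (N : ℕ) : ∀ᵐ ω ∂P, ‖fN N ω‖ ≤ N :=
    ae_of_all _ fun ω => (norm_of_nonneg (hfN0 N ω)).trans_le (min_le_right _ _)
  have hbound (N : ℕ) :
      ∫⁻ ω, ENNReal.ofReal (fN N ω * g ω) ∂P ≤ ENNReal.ofReal (c * ∫ ω, f ω ∂P) := by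
    have hfNm : AEStronglyMeasurable (fN N) P := ((hfN N).mono hm).aestronglyMeasurable
    rw [← ofReal_integral_eq_lintegral_ofReal (hgi.bdd_mul hfNm (hfN_le N))
      (ae_of_all _ fun ω => mul_nonneg (hfN0 N ω) (hg0 ω))]
    refine ENNReal.ofReal_le_ofReal ((integral_mul_le_of_condExp_le_of_le hm (hfN N) (hfN0 N)
      (fun ω => min_le_right _ _) hgi hc).trans ?_)
    exact mul_le_mul_of_nonneg_left
      (integral_mono (Integrable.of_bound hfNm N (hfN_le N)) hfi fun ω => min_le_left _ _) hc0
  have hlim := lintegral_tendsto_of_tendsto_of_monotone (μ := P)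
    (f := fun N ω => ENNReal.ofReal (fN N ω * g ω)) (F := fun ω => ENNReal.ofReal (f ω * g ω))
    (fun N => (((hfN N).mono hm).aemeasurable.mul hgi.aemeasurable).ennreal_ofReal)
    (ae_of_all _ fun ω N M hNM => ENNReal.ofReal_le_ofReal
      (mul_le_mul_of_nonneg_right (min_le_min_left _ (Nat.cast_le.2 hNM)) (hg0 ω)))
    (ae_of_all _ fun ω => tendsto_atTop_of_eventually_const (i₀ := ⌈f ω⌉₊) fun N hN => by
      simp only [fN, min_eq_left ((Nat.le_ceil _).trans (Nat.cast_le.2 hN))])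
  refine ⟨(hf.mono hm).aestronglyMeasurable.mul hgi.1,
    (hasFiniteIntegral_iff_ofReal (ae_of_all _ fun ω => mul_nonneg (hf0 ω) (hg0 ω))).2 ?_⟩
  exact (le_of_tendsto' hlim hbound).trans_lt ENNReal.ofReal_lt_top

lemma condExp_mul_le_of_condExp_le (hm : m ≤ m0) (hf : StronglyMeasurable[m] f) (hf0 : 0 ≤ f)
    (hfi : Integrable f P) (hg0 : 0 ≤ g) (hgi : Integrable g P) (hc0 : 0 ≤ c)
    (hc : P[g|m] ≤ᵐ[P] fun _ => c) :
    P[f * g|m] ≤ᵐ[P] fun ω => c * f ω := by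
  filter_upwards [condExp_mul_of_stronglyMeasurable_left hf
    (integrable_mul_of_condExp_le hm hf hf0 hfi hg0 hgi hc0 hc) hgi, hc] with ω hpull hω
  rw [hpull, Pi.mul_apply, mul_comm c]
  exact mul_le_mul_of_nonneg_left hω (hf0 ω)

end CondExp

section ExpSupermartingale

variable {Ω : Type*} {m0 : MeasurableSpace Ω} {P : Measure Ω} [IsFiniteMeasure P]
  {ℱ : Filtration ℕ m0}

theorem supermartingale_exp_mul_sub_of_condExp_le {S : ℕ → Ω → ℝ} (hS : StronglyAdapted ℱ S)
    (hS0 : S 0 = 0) (l c : ℝ)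
    (hint : ∀ t, Integrable (fun ω => exp (l * (S (t + 1) ω - S t ω))) P)
    (hcond : ∀ t, P[fun ω => exp (l * (S (t + 1) ω - S t ω))|ℱ t] ≤ᵐ[P] fun _ => exp c) :
    Supermartingale (fun t ω => exp (l * S t ω - t * c)) ℱ P := by
  set L : ℕ → Ω → ℝ := fun t ω => exp (l * S t ω - t * c)
  have hL : StronglyAdapted ℱ L := fun t =>
    (measurable_exp.comp (((hS t).measurable.const_mul l).sub_const _)).stronglyMeasurable
  have hL0 : ∀ t, 0 ≤ L t := fun t ω => (exp_pos _).le
  have hL_succ (t : ℕ) :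
      L (t + 1) = exp (-c) • (L t * fun ω => exp (l * (S (t + 1) ω - S t ω))) := by
    ext ω
    simp only [L, Pi.smul_apply, Pi.mul_apply, smul_eq_mul, ← exp_add]
    congr 1
    push_cast
    ring
  have hint_L : ∀ t, Integrable (L t) P := by
    intro t
    induction t with
    | zero => simp [L, hS0]
    | succ t ih =>
      rw [hL_succ]
      exact (integrable_mul_of_condExp_le (ℱ.le t) (hL t) (hL0 t) ih (fun _ => (exp_pos _).le)
        (hint t) (exp_pos c).le (hcond t)).smul _
  refine supermartingale_nat hL hint_L fun t => ?_
  filter_upwards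
    [condExp_smul (exp (-c)) (L t * fun ω => exp (l * (S (t + 1) ω - S t ω))) (ℱ t),
    condExp_mul_le_of_condExp_le (ℱ.le t) (hL t) (hL0 t) (hint_L t) (fun _ => (exp_pos _).le)
      (hint t) (exp_pos c).le (hcond t)] with ω hsmul hle
  rw [hL_succ, hsmul, Pi.smul_apply, smul_eq_mul]
  calc exp (-c) * _ ≤ exp (-c) * (exp c * L t ω) :=
        mul_le_mul_of_nonneg_left hle (exp_pos _).le
    _ = L t ω := by rw [← mul_assoc, ← exp_add, neg_add_cancel, exp_zero, one_mul]

end ExpSupermartingale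

section PartialSum

variable {Ω : Type*} {m0 : MeasurableSpace Ω} {P : Measure Ω} {ℱ : Filtration ℕ m0}
  {X : ℕ → Ω → ℝ} {σ μ : ℝ}

def centeredPartialSum (X : ℕ → Ω → ℝ) (μ : ℝ) (t : ℕ) (ω : Ω) : ℝ :=
  ∑ i ∈ Finset.Icc 1 t, X i ω - t * μ

lemma centeredPartialSum_zero : centeredPartialSum X μ 0 = 0 := by
  ext
  simp [centeredPartialSum]

lemma centeredPartialSum_succ_sub (t : ℕ) (ω : Ω) :
    centeredPartialSum X μ (t + 1) ω - centeredPartialSum X μ t ω = X (t + 1) ω - μ := by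
  simp only [centeredPartialSum, Finset.sum_Icc_succ_top (Nat.le_add_left 1 t)]
  push_cast
  ring

lemma stronglyAdapted_centeredPartialSum (hX : ∀ t, 1 ≤ t → StronglyMeasurable[ℱ t] (X t)) :
    StronglyAdapted ℱ (centeredPartialSum X μ) := fun _ =>
  (Finset.stronglyMeasurable_fun_sum _ fun i hi =>
    (hX i (Finset.mem_Icc.1 hi).1).mono (ℱ.mono (Finset.mem_Icc.1 hi).2)).sub
    stronglyMeasurable_const

lemma supermartingale_exp_centeredPartialSum [IsFiniteMeasure P]
    (hX : ∀ t, 1 ≤ t → StronglyMeasurable[ℱ t] (X t))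
    (hint : ∀ t, 1 ≤ t → ∀ l : ℝ, Integrable (fun ω => exp (l * (X t ω - μ))) P)
    (hsubG : ∀ t, 1 ≤ t → ∀ l : ℝ,
      P[fun ω => exp (l * (X t ω - μ))|ℱ (t - 1)] ≤ᵐ[P] fun _ => exp (l ^ 2 * σ ^ 2 / 2))
    (l : ℝ) :
    Supermartingale
      (fun t ω => exp (l * centeredPartialSum X μ t ω - t * (l ^ 2 * σ ^ 2 / 2))) ℱ P :=
  supermartingale_exp_mul_sub_of_condExp_le (stronglyAdapted_centeredPartialSum hX)
    centeredPartialSum_zero l _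
    (fun t => by simpa only [centeredPartialSum_succ_sub] using hint (t + 1) (by omega) l)
    (fun t => by
      simpa only [centeredPartialSum_succ_sub, Nat.add_sub_cancel]
        using hsubG (t + 1) (by omega) l)

end PartialSum

section Ville

variable {Ω : Type*} {m0 : MeasurableSpace Ω} {P : Measure Ω} {ℱ : Filtration ℕ m0}

theorem MeasureTheory.Supermartingale.integral_stoppedValue_le [IsFiniteMeasure P]
    {f : ℕ → Ω → ℝ} (hf : Supermartingale f ℱ P) {τ : Ω → WithTop ℕ} (hτ : IsStoppingTime ℱ τ)
    {n : ℕ} (hτn : ∀ ω, τ ω ≤ n) :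
    ∫ ω, stoppedValue f τ ω ∂P ≤ ∫ ω, f 0 ω ∂P := by
  have h := hf.neg.expected_stoppedValue_mono (isStoppingTime_const ℱ 0) hτ
    (fun _ => zero_le) hτn
  simp only [stoppedValue_const] at h
  change ∫ ω, -f 0 ω ∂P ≤ ∫ ω, -stoppedValue f τ ω ∂P at h
  rwa [integral_neg, integral_neg, neg_le_neg_iff] at h

lemma measurable_stoppedValue_prod {Λ β : Type*} [MeasurableSpace Λ] [MeasurableSpace β]
    {u : Λ → ℕ → Ω → β} (hu : ∀ t, Measurable fun p : Ω × Λ => u p.2 t p.1)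
    {τ : Ω → WithTop ℕ} (hτ : Measurable τ) :
    Measurable fun p : Ω × Λ => stoppedValue (u p.2) τ p.1 := by
  have hjoint : Measurable fun q : ℕ × (Ω × Λ) => u q.2.2 q.1 q.2.1 :=
    measurable_from_prod_countable_right fun t => hu t
  exact hjoint.comp
    ((WithTop.measurable_untopA.comp (hτ.comp measurable_fst)).prodMk measurable_id)

theorem maximal_ineq_of_lintegral_stoppedValue_le {M : ℕ → Ω → ℝ} (hM : StronglyAdapted ℱ M)
    {c : ℝ} (hc : 0 < c) (n : ℕ)
    (hbound : ∀ τ : Ω → WithTop ℕ, IsStoppingTime ℱ τ → (∀ ω, τ ω ≤ n) →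
      ∫⁻ ω, ENNReal.ofReal (stoppedValue M τ ω) ∂P ≤ 1) :
    P {ω | ∃ t ≤ n, c ≤ M t ω} ≤ ENNReal.ofReal c⁻¹ := by
  set τ : Ω → WithTop ℕ := fun ω => (hittingBtwn M (Set.Ici c) 0 n ω : ℕ)
  have hτ : IsStoppingTime ℱ τ := hM.adapted.isStoppingTime_hittingBtwn measurableSet_Ici
  have hτn (ω : Ω) : τ ω ≤ n := WithTop.coe_le_coe.2 (hittingBtwn_le ω)
  have hmeas : Measurable fun ω => ENNReal.ofReal (stoppedValue M τ ω) :=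
    ((measurable_stoppedValue hM.isStronglyProgressive_of_discrete hτ).mono
      hτ.measurableSpace_le le_rfl).ennreal_ofReal
  have hsub : {ω | ∃ t ≤ n, c ≤ M t ω}
      ⊆ {ω | ENNReal.ofReal c ≤ ENNReal.ofReal (stoppedValue M τ ω)} := by
    rintro ω ⟨t, htn, ht⟩
    exact ENNReal.ofReal_le_ofReal (hittingBtwn_mem_set ⟨t, ⟨zero_le, htn⟩, ht⟩)
  have hmarkov := (mul_meas_ge_le_lintegral₀ hmeas.aemeasurable (ENNReal.ofReal c)).trans
    (hbound τ hτ hτn)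
  rw [ENNReal.ofReal_inv_of_pos hc]
  exact (measure_mono hsub).trans (ENNReal.le_inv_iff_mul_le.2 (by rwa [mul_comm]))

theorem ville_ineq_of_lintegral_stoppedValue_le {M : ℕ → Ω → ℝ} (hM : StronglyAdapted ℱ M)
    {c : ℝ} (hc : 0 < c)
    (hbound : ∀ τ : Ω → WithTop ℕ, IsStoppingTime ℱ τ → ∀ n : ℕ, (∀ ω, τ ω ≤ n) →
      ∫⁻ ω, ENNReal.ofReal (stoppedValue M τ ω) ∂P ≤ 1) :
    P {ω | ∃ t, c ≤ M t ω} ≤ ENNReal.ofReal c⁻¹ := by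
  have hunion : {ω | ∃ t, c ≤ M t ω} = ⋃ n, {ω | ∃ t ≤ n, c ≤ M t ω} := by
    ext ω
    simp only [Set.mem_ofPred_eq, Set.mem_iUnion]
    exact ⟨fun ⟨t, ht⟩ => ⟨t, t, le_rfl, ht⟩, fun ⟨_, t, _, ht⟩ => ⟨t, ht⟩⟩
  have hmono : Monotone fun n => {ω | ∃ t ≤ n, c ≤ M t ω} :=
    fun _ _ hnk _ ⟨t, htn, ht⟩ => ⟨t, htn.trans hnk, ht⟩
  rw [hunion, hmono.measure_iUnion]
  exact iSup_le fun n =>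
    maximal_ineq_of_lintegral_stoppedValue_le hM hc n fun τ hτ hτn => hbound τ hτ n hτn

theorem ville_ineq_of_mixture [IsFiniteMeasure P] {Λ : Type*} [MeasurableSpace Λ]
    {ν : Measure Λ} [IsProbabilityMeasure ν] {L : Λ → ℕ → Ω → ℝ}
    (hL : ∀ l, Supermartingale (L l) ℱ P) (hL_nonneg : ∀ l t ω, 0 ≤ L l t ω)
    (hL0 : ∀ l, ∫ ω, L l 0 ω ∂P ≤ 1) (hL_meas : ∀ t, Measurable fun p : Ω × Λ => L p.2 t p.1)
    {M : ℕ → Ω → ℝ} (hM : StronglyAdapted ℱ M)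
    (hmix : ∀ t ω, ENNReal.ofReal (M t ω) = ∫⁻ l, ENNReal.ofReal (L l t ω) ∂ν)
    {c : ℝ} (hc : 0 < c) :
    P {ω | ∃ t, c ≤ M t ω} ≤ ENNReal.ofReal c⁻¹ := by
  refine ville_ineq_of_lintegral_stoppedValue_le hM hc fun τ hτ n hτn => ?_
  have hstopped (l : Λ) : ∫⁻ ω, ENNReal.ofReal (stoppedValue (L l) τ ω) ∂P ≤ 1 := by
    rw [← ofReal_integral_eq_lintegral_ofReal
      (integrable_stoppedValue ℕ hτ (hL l).integrable hτn) (ae_of_all _ fun ω => hL_nonneg _ _ _)]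
    exact ENNReal.ofReal_le_one.2 (((hL l).integral_stoppedValue_le hτ hτn).trans (hL0 l))
  calc ∫⁻ ω, ENNReal.ofReal (stoppedValue M τ ω) ∂P
      = ∫⁻ ω, ∫⁻ l, ENNReal.ofReal (stoppedValue (L l) τ ω) ∂ν ∂P :=
        lintegral_congr fun ω => hmix _ ω
    _ = ∫⁻ l, ∫⁻ ω, ENNReal.ofReal (stoppedValue (L l) τ ω) ∂P ∂ν :=
        lintegral_lintegral_swap
          (measurable_stoppedValue_prod hL_meas hτ.measurable').ennreal_ofReal.aemeasurable
    _ ≤ ∫⁻ _, 1 ∂ν := lintegral_mono hstopped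
    _ = 1 := by simp

end Ville

lemma inv_le_mixture_of_boundary_le {σ ρ α t s : ℝ} (hσ : 0 < σ) (hρ : 0 < ρ)
    (hα : α ∈ Set.Ioo 0 1) (ht : 0 < t)
    (h : σ * √((t * ρ ^ 2 + 1) / (t ^ 2 * ρ ^ 2) * log ((t * ρ ^ 2 + 1) / α ^ 2)) ≤ |s| / t) :
    α⁻¹ ≤ (√(t * ρ ^ 2 + 1))⁻¹ * exp (ρ ^ 2 * s ^ 2 / (2 * σ ^ 2 * (t * ρ ^ 2 + 1))) := by
  obtain ⟨hα0, hα1⟩ := hα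
  set K := t * ρ ^ 2 + 1
  have hK : 1 ≤ K := le_add_of_nonneg_left (by positivity)
  have hlog0 : 0 ≤ log (K / α ^ 2) :=
    log_nonneg ((one_le_div (by positivity)).2 ((pow_lt_one₀ hα0.le hα1 two_ne_zero).le.trans hK))
  have hsq := pow_le_pow_left₀ (by positivity) h 2
  rw [mul_pow, sq_sqrt (by positivity), div_pow, sq_abs] at hsq
  have hlog : log (K / α ^ 2) / 2 ≤ ρ ^ 2 * s ^ 2 / (2 * σ ^ 2 * K) := by
    rw [div_le_div_iff₀ (by norm_num) (by positivity)]
    field_simp at hsq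
    linarith
  have hexp : exp (log (K / α ^ 2) / 2) = √K * α⁻¹ := by
    rw [exp_half, exp_log (by positivity), sqrt_div' _ (by positivity), sqrt_sq hα0.le,
      div_eq_mul_inv]
  calc α⁻¹ = (√K)⁻¹ * exp (log (K / α ^ 2) / 2) := by
        rw [hexp, ← mul_assoc, inv_mul_cancel₀ (by positivity), one_mul]
    _ ≤ _ := by gcongr

/-- **Sub-Gaussian mixture confidence sequence** (Darling–Robbins): if each `X t`
(for `t ≥ 1`) is conditionally `σ`-sub-Gaussian around `μ` given `ℱ (t-1)`, then
for every `ρ > 0` and `α ∈ (0,1)`, with `Y t = ∑_{i=1}^t X i`,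
`P(∃ t ≥ 1 : |Y t / t - μ| ≥ σ √(((tρ²+1)/(t²ρ²)) log((tρ²+1)/α²))) ≤ α`. -/
theorem subGaussian_mixture_confidence_sequence
    {Ω : Type*} {m0 : MeasurableSpace Ω} {P : Measure Ω} [IsProbabilityMeasure P]
    {ℱ : Filtration ℕ m0}
    (X : ℕ → Ω → ℝ) (hX : ∀ t, 1 ≤ t → StronglyMeasurable[ℱ t] (X t))
    (σ μ : ℝ) (hσ : 0 < σ)
    (hint : ∀ t, 1 ≤ t → ∀ l : ℝ, Integrable (fun ω => Real.exp (l * (X t ω - μ))) P)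
    (hsubG : ∀ t, 1 ≤ t → ∀ l : ℝ,
      P[fun ω => Real.exp (l * (X t ω - μ))|ℱ (t-1)]
        ≤ᵐ[P] fun _ => Real.exp (l^2 * σ^2 / 2))
    (ρ : ℝ) (hρ : 0 < ρ) {α : ℝ} (hα : α ∈ Set.Ioo (0:ℝ) 1) :
    P {ω | ∃ t : ℕ, 1 ≤ t ∧
        σ * Real.sqrt ((((t : ℝ) * ρ^2 + 1) / ((t : ℝ)^2 * ρ^2)) *
            Real.log (((t : ℝ) * ρ^2 + 1) / α^2))
          ≤ |(∑ i ∈ Finset.Icc 1 t, X i ω) / (t : ℝ) - μ|}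
      ≤ ENNReal.ofReal α := by
  have hS := stronglyAdapted_centeredPartialSum (μ := μ) hX
  have hSm (t : ℕ) : Measurable (centeredPartialSum X μ t) :=
    ((hS t).mono (ℱ.le t)).measurable
  set M : ℕ → Ω → ℝ := fun t ω => (√(t * ρ ^ 2 + 1))⁻¹ *
    exp (ρ ^ 2 * centeredPartialSum X μ t ω ^ 2 / (2 * σ ^ 2 * (t * ρ ^ 2 + 1)))
  have hM : StronglyAdapted ℱ M := fun t => by
    have := (hS t).measurable
    exact Measurable.stronglyMeasurable (by fun_prop)
  have hville := ville_ineq_of_mixture (supermartingale_exp_centeredPartialSum hX hint hsubG)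
    (fun _ _ _ => (exp_pos _).le) (fun _ => by simp [centeredPartialSum_zero])
    (fun t => by fun_prop) hM
    (fun t ω => (lintegral_exp_sub_gaussianReal_div_sq hσ hρ t.cast_nonneg _).symm)
    (inv_pos.2 hα.1)
  rw [inv_inv] at hville
  refine (measure_mono ?_).trans hville
  rintro ω ⟨t, ht, hbound⟩
  have htpos : (0 : ℝ) < t := by exact_mod_cast ht
  refine ⟨t, inv_le_mixture_of_boundary_le hσ hρ hα htpos ?_⟩
  rwa [show (∑ i ∈ Finset.Icc 1 t, X i ω) / t - μ = centeredPartialSum X μ t ω / t by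
      simp only [centeredPartialSum]; field_simp,
    abs_div, abs_of_pos htpos] at hbound
end

section
/- Empirical-Bernstein supermartingale: let ψ(λ) := −log(1−λ) − λ for λ ∈ [0,1). Let (X_t)_{t≥1} be an adapted process with X_t ∈ [0,1] a.s. and E[X_t | 𝓕_{t−1}] = μ a.s. for every t, where μ ∈ [0,1]. Let (λ_t)_{t≥1} and (μ̂_t)_{t≥1} be predictable processes with λ_t ∈ [0,1) and μ̂_t ∈ [0,1] a.s. Then N_t := exp( Σ_{i=1}^t ( λ_i(X_i − μ) − ψ(λ_i)(X_i − μ̂_i)² ) ), with N_0 := 1, is a test supermartingale with respect to (𝓕_t). -/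
/-!
Fan's inequality `exp (λc - ψ(λ)c²) ≤ 1 + λc` for `c ≥ -1`, `0 ≤ λ < 1`, applied with
`c = X_t - μ̂_t`, bounds the `t`-th factor of `N` by `e^{λ_t(μ̂_t - μ)} (1 + λ_t (X_t - μ̂_t))`,
which is affine in `X_t` with `𝓕_{t-1}`-measurable coefficients. Its conditional expectation is
therefore `e^{a} (1 - a)` with `a = λ_t(μ̂_t - μ)`, which is at most `1`; so every factor has
conditional mean at most `1` and the product is a supermartingale.
-/

open MeasureTheory Filter
open scoped ENNReal

/-- `ψ(λ) = -log(1-λ) - λ`, the log-MGF of a centered unit-rate exponential. -/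
noncomputable def psiEB (l : ℝ) : ℝ := -Real.log (1 - l) - l

open Real Set

lemma psiEB_nonneg {l : ℝ} (hl : l < 1) : 0 ≤ psiEB l := by
  have := log_le_sub_one_of_pos (sub_pos.2 hl)
  rw [psiEB]; linarith

@[fun_prop]
lemma measurable_psiEB : Measurable psiEB := by
  unfold psiEB; fun_prop

lemma hasDerivAt_psiEB {x : ℝ} (hx : x < 1) : HasDerivAt psiEB (x / (1 - x)) x := by
  have h : HasDerivAt psiEB (-(-1 / (1 - x)) - 1) x :=
    (((hasDerivAt_id' x).const_sub 1).log (sub_pos.2 hx).ne').neg.sub (hasDerivAt_id' x)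
  have : 1 - x ≠ 0 := (sub_pos.2 hx).ne'
  refine h.congr_deriv ?_
  field_simp
  ring

/-- Fan's inequality. -/
lemma mul_sub_psiEB_mul_sq_le_log {c l : ℝ} (hc : -1 ≤ c) (hl0 : 0 ≤ l) (hl1 : l < 1) :
    l * c - psiEB l * c ^ 2 ≤ log (1 + l * c) := by
  have hpos : ∀ x ∈ Ico (0 : ℝ) 1, 0 < 1 + x * c := fun x hx => by nlinarith [hx.1, hx.2]
  set φ : ℝ → ℝ := fun x => log (1 + x * c) - x * c + psiEB x * c ^ 2
  have hφ : ∀ x ∈ Ico (0 : ℝ) 1,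
      HasDerivAt φ (x * c ^ 2 * (1 / (1 - x) - 1 / (1 + x * c))) x := by
    intro x hx
    have h : HasDerivAt φ (1 * c / (1 + x * c) - 1 * c + x / (1 - x) * c ^ 2) x :=
      ((((hasDerivAt_id' x).mul_const c).const_add 1).log (hpos x hx).ne').sub
        ((hasDerivAt_id' x).mul_const c) |>.add ((hasDerivAt_psiEB hx.2).mul_const (c ^ 2))
    have h1 : 1 - x ≠ 0 := (sub_pos.2 hx.2).ne'
    have h2 : 1 + x * c ≠ 0 := (hpos x hx).ne'
    refine h.congr_deriv ?_
    symm
    field_simp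
    ring
  have hmono : MonotoneOn φ (Ico 0 1) := by
    refine monotoneOn_of_hasDerivWithinAt_nonneg (convex_Ico 0 1)
      (fun x hx => (hφ x hx).continuousAt.continuousWithinAt)
      (fun x hx => (hφ x (interior_subset hx)).hasDerivWithinAt) fun x hx => ?_
    rw [interior_Ico] at hx
    have hle : 1 - x ≤ 1 + x * c := by nlinarith [hx.1]
    exact mul_nonneg (mul_nonneg hx.1.le (sq_nonneg c))
      (sub_nonneg.2 (one_div_le_one_div_of_le (sub_pos.2 hx.2) hle))
  have hφ0 : φ 0 = 0 := by simp [φ, psiEB]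
  have h := hmono ⟨le_rfl, zero_lt_one⟩ ⟨hl0, hl1⟩ hl0
  simp only [hφ0, φ] at h
  linarith

noncomputable def ebIncrement (μ l x μhat : ℝ) : ℝ := l * (x - μ) - psiEB l * (x - μhat) ^ 2

lemma Measurable.ebIncrement {Ω : Type*} {m : MeasurableSpace Ω} (μ : ℝ) {l x μhat : Ω → ℝ}
    (hl : Measurable l) (hx : Measurable x) (hμhat : Measurable μhat) :
    Measurable fun ω => ebIncrement μ (l ω) (x ω) (μhat ω) := by
  unfold _root_.ebIncrement; fun_prop

lemma ebIncrement_le_one_add_abs {μ l x μhat : ℝ} (hx : x ∈ Icc 0 1) (hl : l ∈ Ico 0 1) :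
    ebIncrement μ l x μhat ≤ 1 + |μ| := by
  have hψ : 0 ≤ psiEB l * (x - μhat) ^ 2 := mul_nonneg (psiEB_nonneg hl.2) (sq_nonneg _)
  have hlin : l * (x - μ) ≤ 1 + |μ| := by
    nlinarith [hx.1, hx.2, hl.1, hl.2, neg_abs_le μ, abs_nonneg μ]
  rw [ebIncrement]; linarith

lemma exp_ebIncrement_le {μ l x μhat : ℝ} (hl0 : 0 ≤ l) (hl1 : l < 1) (hx : -1 ≤ x - μhat) :
    exp (ebIncrement μ l x μhat) ≤ exp (l * (μhat - μ)) * (1 + l * (x - μhat)) := by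
  have hpos : 0 < 1 + l * (x - μhat) := by nlinarith
  calc exp (ebIncrement μ l x μhat)
      = exp (l * (μhat - μ)) * exp (l * (x - μhat) - psiEB l * (x - μhat) ^ 2) := by
        rw [← exp_add, ebIncrement]; congr 1; ring
    _ ≤ exp (l * (μhat - μ)) * (1 + l * (x - μhat)) := by
        gcongr
        rw [← exp_log hpos]
        exact exp_le_exp.2 (mul_sub_psiEB_mul_sq_le_log hx hl0 hl1)

lemma exp_mul_one_sub_le_one (a : ℝ) : exp a * (1 - a) ≤ 1 := by
  calc exp a * (1 - a) ≤ exp a * exp (-a) := by gcongr; exact one_sub_le_exp_neg a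
    _ = 1 := by rw [← exp_add, add_neg_cancel, exp_zero]

section CondExp

variable {Ω : Type*} {m m0 : MeasurableSpace Ω} {P : Measure Ω}

theorem condExp_le_add_mul_of_le {X Y A B : Ω → ℝ} {c : ℝ} (hm : m ≤ m0)
    [SigmaFinite (P.trim hm)]
    (hA : StronglyMeasurable[m] A) (hB : StronglyMeasurable[m] B)
    (hY : Integrable Y P) (hAi : Integrable A P) (hBX : Integrable (fun ω => B ω * X ω) P)
    (hX : Integrable X P) (hle : Y ≤ᵐ[P] fun ω => A ω + B ω * X ω)
    (hmean : P[X|m] =ᵐ[P] fun _ => c) :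
    P[Y|m] ≤ᵐ[P] fun ω => A ω + B ω * c := by
  have hsum : P[fun ω => A ω + B ω * X ω|m] =ᵐ[P] fun ω => A ω + B ω * c := by
    filter_upwards [condExp_add hAi hBX m, condExp_mul_of_stronglyMeasurable_left hB hBX hX, hmean]
      with ω hadd hmul hc
    calc P[fun ω => A ω + B ω * X ω|m] ω = P[A|m] ω + P[fun ω => B ω * X ω|m] ω := hadd
      _ = A ω + B ω * P[X|m] ω := by
        rw [condExp_of_stronglyMeasurable hm hA hAi]; exact congrArg _ hmul
      _ = A ω + B ω * c := by rw [hc]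
  filter_upwards [condExp_mono hY (hAi.add hBX) hle, hsum] with ω hle hsum
  exact hle.trans_eq hsum

theorem condExp_exp_ebIncrement_le_one [IsFiniteMeasure P] (hm : m ≤ m0) {μ : ℝ}
    {X l μhat : Ω → ℝ} (hX : Measurable X) (hl : Measurable[m] l) (hμhat : Measurable[m] μhat)
    (hXb : ∀ᵐ ω ∂P, X ω ∈ Icc 0 1) (hlb : ∀ᵐ ω ∂P, l ω ∈ Ico 0 1)
    (hμhatb : ∀ᵐ ω ∂P, μhat ω ∈ Icc 0 1) (hmean : P[X|m] =ᵐ[P] fun _ => μ) :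
    P[fun ω => exp (ebIncrement μ (l ω) (X ω) (μhat ω))|m] ≤ᵐ[P] 1 := by
  set E : Ω → ℝ := fun ω => exp (l ω * (μhat ω - μ))
  have hl₀ : Measurable l := hl.mono hm le_rfl
  have hμhat₀ : Measurable μhat := hμhat.mono hm le_rfl
  have hAm : Measurable[m] fun ω => E ω * (1 - l ω * μhat ω) := by fun_prop
  have hBm : Measurable[m] fun ω => E ω * l ω := by fun_prop
  have hle : (fun ω => exp (ebIncrement μ (l ω) (X ω) (μhat ω))) ≤ᵐ[P]
      fun ω => E ω * (1 - l ω * μhat ω) + E ω * l ω * X ω := by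
    filter_upwards [hXb, hlb, hμhatb] with ω ⟨hx0, _⟩ ⟨hl0, hl1⟩ ⟨_, hμ1⟩
    refine (exp_ebIncrement_le hl0 hl1 (by linarith)).trans_eq ?_
    ring
  have hE_le : ∀ᵐ ω ∂P, ‖E ω‖ ≤ exp (1 + |μ|) := by
    filter_upwards [hlb, hμhatb] with ω ⟨hl0, hl1⟩ ⟨hμ0, hμ1⟩
    rw [norm_of_nonneg (exp_pos _).le, exp_le_exp]
    nlinarith [neg_abs_le μ, abs_nonneg μ]
  have hY : Integrable (fun ω => exp (ebIncrement μ (l ω) (X ω) (μhat ω))) P := by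
    refine .of_bound (hl₀.ebIncrement μ hX hμhat₀).exp.aestronglyMeasurable (exp (1 + |μ|)) ?_
    filter_upwards [hXb, hlb] with ω hx hl
    rw [norm_of_nonneg (exp_pos _).le, exp_le_exp]
    exact ebIncrement_le_one_add_abs hx hl
  have hA : Integrable (fun ω => E ω * (1 - l ω * μhat ω)) P := by
    refine .of_bound (hAm.mono hm le_rfl).aestronglyMeasurable (exp (1 + |μ|) * 1) ?_
    filter_upwards [hE_le, hlb, hμhatb] with ω hE ⟨hl0, hl1⟩ ⟨hμ0, hμ1⟩
    exact norm_mul_le_of_le hE (abs_le.2 ⟨by nlinarith, by nlinarith⟩)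
  have hBX : Integrable (fun ω => E ω * l ω * X ω) P := by
    refine .of_bound (by fun_prop) (exp (1 + |μ|) * 1) ?_
    filter_upwards [hE_le, hlb, hXb] with ω hE ⟨hl0, hl1⟩ ⟨hx0, hx1⟩
    rw [mul_assoc]
    exact norm_mul_le_of_le hE (abs_le.2 ⟨by nlinarith, by nlinarith⟩)
  have hXi : Integrable X P := by
    refine .of_bound hX.aestronglyMeasurable 1 ?_
    filter_upwards [hXb] with ω ⟨hx0, hx1⟩
    exact abs_le.2 ⟨by linarith, hx1⟩
  filter_upwards [condExp_le_add_mul_of_le hm hAm.stronglyMeasurable hBm.stronglyMeasurable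
    hY hA hBX hXi hle hmean] with ω hω
  calc _ ≤ E ω * (1 - l ω * μhat ω) + E ω * l ω * μ := hω
    _ = E ω * (1 - l ω * (μhat ω - μ)) := by ring
    _ ≤ 1 := exp_mul_one_sub_le_one _

end CondExp

section ExpSum

variable {Ω : Type*} {m0 : MeasurableSpace Ω} {P : Measure Ω} [IsFiniteMeasure P]
  {ℱ : Filtration ℕ m0}

theorem supermartingale_exp_sum {f : ℕ → Ω → ℝ} {C : ℝ}
    (hf : ∀ i, 1 ≤ i → Measurable[ℱ i] (f i)) (hbdd : ∀ i, 1 ≤ i → ∀ᵐ ω ∂P, f i ω ≤ C)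
    (hmgf : ∀ t, P[fun ω => exp (f (t + 1) ω)|ℱ t] ≤ᵐ[P] 1) :
    Supermartingale (fun t ω => exp (∑ i ∈ Finset.Icc 1 t, f i ω)) ℱ P := by
  set N : ℕ → Ω → ℝ := fun t ω => exp (∑ i ∈ Finset.Icc 1 t, f i ω)
  have hadapted : StronglyAdapted ℱ N := fun t =>
    (Finset.measurable_sum _ fun i hi => (hf i (Finset.mem_Icc.1 hi).1).mono
      (ℱ.mono (Finset.mem_Icc.1 hi).2) le_rfl).exp.stronglyMeasurable
  have hbdd_all : ∀ᵐ ω ∂P, ∀ i, 1 ≤ i → f i ω ≤ C :=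
    ae_all_iff.2 fun i => eventually_imp_distrib_left.2 (hbdd i)
  have hint : ∀ t, Integrable (N t) P := fun t => by
    refine .of_bound ((hadapted t).mono (ℱ.le t)).aestronglyMeasurable (exp (t * C)) ?_
    filter_upwards [hbdd_all] with ω hω
    rw [norm_of_nonneg (exp_pos _).le, exp_le_exp]
    calc ∑ i ∈ Finset.Icc 1 t, f i ω ≤ ∑ i ∈ Finset.Icc 1 t, C :=
          Finset.sum_le_sum fun i hi => hω i (Finset.mem_Icc.1 hi).1
      _ = t * C := by simp
  have hint_exp : ∀ t, Integrable (fun ω => exp (f (t + 1) ω)) P := fun t => by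
    have ht : 1 ≤ t + 1 := Nat.le_add_left 1 t
    refine .of_bound ((hf (t + 1) ht).mono (ℱ.le _) le_rfl).exp.aestronglyMeasurable
      (exp C) ?_
    filter_upwards [hbdd (t + 1) ht] with ω hω
    rwa [norm_of_nonneg (exp_pos _).le, exp_le_exp]
  refine supermartingale_nat hadapted hint fun t => ?_
  have ht : 1 ≤ t + 1 := Nat.le_add_left 1 t
  have hsplit : N (t + 1) = N t * fun ω => exp (f (t + 1) ω) := by
    funext ω
    simp only [N, Pi.mul_apply, Finset.sum_Icc_succ_top ht, exp_add]
  have hint_succ := hint (t + 1)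
  rw [hsplit] at hint_succ ⊢
  filter_upwards [condExp_mul_of_stronglyMeasurable_left (hadapted t) hint_succ (hint_exp t),
    hmgf t] with ω hmul hle
  rw [hmul, Pi.mul_apply]
  exact mul_le_of_le_one_right (exp_pos _).le hle

end ExpSum

theorem empirical_bernstein_supermartingale_general
    {Ω : Type*} {m0 : MeasurableSpace Ω} {P : Measure Ω} [IsProbabilityMeasure P]
    {ℱ : Filtration ℕ m0}
    (μ : ℝ)
    (X : ℕ → Ω → ℝ) (hX : ∀ t, 1 ≤ t → StronglyMeasurable[ℱ t] (X t))
    (hXb : ∀ t, 1 ≤ t → ∀ᵐ ω ∂P, X t ω ∈ Set.Icc (0:ℝ) 1)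
    (hmean : ∀ t, 1 ≤ t → P[X t|ℱ (t-1)] =ᵐ[P] fun _ => μ)
    (lam : ℕ → Ω → ℝ) (hlam : ∀ t, 1 ≤ t → StronglyMeasurable[ℱ (t-1)] (lam t))
    (hlamb : ∀ t, 1 ≤ t → ∀ᵐ ω ∂P, lam t ω ∈ Set.Ico (0:ℝ) 1)
    (muhat : ℕ → Ω → ℝ) (hmuhat : ∀ t, 1 ≤ t → StronglyMeasurable[ℱ (t-1)] (muhat t))
    (hmuhatb : ∀ t, 1 ≤ t → ∀ᵐ ω ∂P, muhat t ω ∈ Set.Icc (0:ℝ) 1)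
    (N : ℕ → Ω → ℝ)
    (hN : ∀ t ω, N t ω = Real.exp (∑ i ∈ Finset.Icc 1 t,
        (lam i ω * (X i ω - μ) - psiEB (lam i ω) * (X i ω - muhat i ω)^2))) :
    Supermartingale N ℱ P ∧ (∀ t ω, 0 ≤ N t ω) ∧ (∀ ω, N 0 ω = 1) := by
  obtain rfl : N = fun t ω => exp (∑ i ∈ Finset.Icc 1 t,
      ebIncrement μ (lam i ω) (X i ω) (muhat i ω)) := funext₂ hN
  refine ⟨supermartingale_exp_sum (C := 1 + |μ|) (fun i hi => ?_) (fun i hi => ?_) (fun t => ?_),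
    fun t ω => (exp_pos _).le, fun ω => by simp⟩
  · have hpred : ℱ (i - 1) ≤ ℱ i := ℱ.mono (Nat.sub_le i 1)
    exact .ebIncrement μ ((hlam i hi).measurable.mono hpred le_rfl) (hX i hi).measurable
      ((hmuhat i hi).measurable.mono hpred le_rfl)
  · filter_upwards [hXb i hi, hlamb i hi] with ω hx hl using ebIncrement_le_one_add_abs hx hl
  · have ht : 1 ≤ t + 1 := Nat.le_add_left 1 t
    exact condExp_exp_ebIncrement_le_one (ℱ.le t)
      ((hX (t + 1) ht).measurable.mono (ℱ.le _) le_rfl)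
      (hlam (t + 1) ht).measurable (hmuhat (t + 1) ht).measurable
      (hXb (t + 1) ht) (hlamb (t + 1) ht) (hmuhatb (t + 1) ht)
      (hmean (t + 1) ht)

/-- **Empirical-Bernstein supermartingale**: if `X t ∈ [0,1]` a.s. with conditional
mean `μ`, and `(λ t)`, `(μ̂ t)` are predictable with `λ t ∈ [0,1)`, `μ̂ t ∈ [0,1]`
a.s., then `N t = exp (∑_{i=1}^t (λ i (X i - μ) - ψ(λ i)(X i - μ̂ i)²))` is a
test supermartingale. -/
theorem empirical_bernstein_supermartingale
    {Ω : Type*} {m0 : MeasurableSpace Ω} {P : Measure Ω} [IsProbabilityMeasure P]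
    {ℱ : Filtration ℕ m0}
    (μ : ℝ) (hμ : μ ∈ Set.Icc (0:ℝ) 1)
    (X : ℕ → Ω → ℝ) (hX : ∀ t, 1 ≤ t → StronglyMeasurable[ℱ t] (X t))
    (hXb : ∀ t, 1 ≤ t → ∀ᵐ ω ∂P, X t ω ∈ Set.Icc (0:ℝ) 1)
    (hmean : ∀ t, 1 ≤ t → P[X t|ℱ (t-1)] =ᵐ[P] fun _ => μ)
    (lam : ℕ → Ω → ℝ) (hlam : ∀ t, 1 ≤ t → StronglyMeasurable[ℱ (t-1)] (lam t))
    (hlamb : ∀ t, 1 ≤ t → ∀ᵐ ω ∂P, lam t ω ∈ Set.Ico (0:ℝ) 1)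
    (muhat : ℕ → Ω → ℝ) (hmuhat : ∀ t, 1 ≤ t → StronglyMeasurable[ℱ (t-1)] (muhat t))
    (hmuhatb : ∀ t, 1 ≤ t → ∀ᵐ ω ∂P, muhat t ω ∈ Set.Icc (0:ℝ) 1)
    (N : ℕ → Ω → ℝ)
    (hN : ∀ t ω, N t ω = Real.exp (∑ i ∈ Finset.Icc 1 t,
        (lam i ω * (X i ω - μ) - psiEB (lam i ω) * (X i ω - muhat i ω)^2))) :
    Supermartingale N ℱ P ∧ (∀ t ω, 0 ≤ N t ω) ∧ (∀ ω, N 0 ω = 1) :=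
  empirical_bernstein_supermartingale_general μ X hX hXb hmean lam hlam hlamb muhat hmuhat hmuhatb N
    hN
end

section
/- Fan's inequality: let ψ(λ) := −log(1−λ) − λ. For every real y ≥ −1 and every λ ∈ [0,1), one has exp( λy − ψ(λ) y² ) ≤ 1 + λy; equivalently, λy − ψ(λ)y² ≤ log(1 + λy), with the convention log 0 = −∞. -/
/-!
Fix `y ≥ -1` and consider
`g(t) = log (1 + t y) - t y - y² (log (1 - t) + t)` on `[0, 1)`, so that `g(0) = 0` and the
claim is `g(λ) ≥ 0`. Differentiating,
`g'(t) = t y² (1 / (1 - t) - 1 / (1 + t y))`, which is nonnegative because `y ≥ -1` gives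
`0 < 1 - t ≤ 1 + t y`. Hence `g` is monotone and `g(λ) ≥ g(0) = 0`.
-/

open Real Set

noncomputable def fanGap (y t : ℝ) : ℝ :=
  log (1 + t * y) - t * y - y ^ 2 * (log (1 - t) + t)

@[simp]
lemma fanGap_zero (y : ℝ) : fanGap y 0 = 0 := by
  simp [fanGap]

lemma one_sub_le_one_add_mul {t y : ℝ} (ht : 0 ≤ t) (hy : -1 ≤ y) : 1 - t ≤ 1 + t * y := by
  nlinarith

lemma hasDerivAt_fanGap {y t : ℝ} (ht : 1 - t ≠ 0) (hty : 1 + t * y ≠ 0) :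
    HasDerivAt (fanGap y) (t * y ^ 2 * (1 / (1 - t) - 1 / (1 + t * y))) t := by
  have hlin : HasDerivAt (fun s : ℝ => s * y) y t := by
    simpa using (hasDerivAt_id t).mul_const y
  have hlog₁ : HasDerivAt (fun s : ℝ => log (1 + s * y)) (y / (1 + t * y)) t := by
    simpa using (hlin.const_add 1).log hty
  have hlog₂ : HasDerivAt (fun s : ℝ => log (1 - s)) (-1 / (1 - t)) t := by
    simpa using ((hasDerivAt_id t).const_sub 1).log ht
  have hraw : HasDerivAt (fanGap y) (y / (1 + t * y) - y - y ^ 2 * (-1 / (1 - t) + 1)) t :=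
    (hlog₁.sub hlin).sub ((hlog₂.add (hasDerivAt_id t)).const_mul (y ^ 2))
  refine hraw.congr_deriv ?_
  have hyt : 1 + y * t ≠ 0 := by rwa [mul_comm]
  field_simp
  ring

lemma fanGap_monotoneOn {y : ℝ} (hy : -1 ≤ y) : MonotoneOn (fanGap y) (Ico 0 1) := by
  have hpos : ∀ t ∈ Ico (0 : ℝ) 1, 0 < 1 - t ∧ 0 < 1 + t * y := fun t ⟨ht₀, ht₁⟩ =>
    ⟨by linarith, by linarith [one_sub_le_one_add_mul ht₀ hy]⟩
  have hderiv : ∀ t ∈ Ico (0 : ℝ) 1,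
      HasDerivAt (fanGap y) (t * y ^ 2 * (1 / (1 - t) - 1 / (1 + t * y))) t :=
    fun t ht => hasDerivAt_fanGap (hpos t ht).1.ne' (hpos t ht).2.ne'
  refine monotoneOn_of_deriv_nonneg (convex_Ico 0 1)
    (fun t ht => (hderiv t ht).continuousAt.continuousWithinAt) (fun t ht => ?_) (fun t ht => ?_)
  all_goals rw [interior_Ico] at ht
  · exact (hderiv t (Ioo_subset_Ico_self ht)).differentiableAt.differentiableWithinAt
  · rw [(hderiv t (Ioo_subset_Ico_self ht)).deriv]
    have hrecip : 1 / (1 + t * y) ≤ 1 / (1 - t) :=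
      one_div_le_one_div_of_le (hpos t (Ioo_subset_Ico_self ht)).1
        (one_sub_le_one_add_mul ht.1.le hy)
    exact mul_nonneg (mul_nonneg ht.1.le (sq_nonneg y)) (sub_nonneg.mpr hrecip)

/-- **Fan's inequality**: with `ψ(λ) = -log(1-λ) - λ`, for every `y ≥ -1` and
`λ ∈ [0,1)` one has `exp (λ y - ψ(λ) y²) ≤ 1 + λ y`. -/
theorem fan_inequality (y : ℝ) (hy : -1 ≤ y) (l : ℝ) (hl : l ∈ Set.Ico (0:ℝ) 1) :
    Real.exp (l * y - (-Real.log (1 - l) - l) * y^2) ≤ 1 + l * y := by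
  have hgap : 0 ≤ fanGap y l := by
    simpa using fanGap_monotoneOn hy ⟨le_rfl, zero_lt_one⟩ hl hl.1
  have hpos : 0 < 1 + l * y := by
    linarith [one_sub_le_one_add_mul hl.1 hy, hl.2]
  calc Real.exp (l * y - (-Real.log (1 - l) - l) * y ^ 2)
      ≤ Real.exp (Real.log (1 + l * y)) := by
        rw [exp_le_exp]
        unfold fanGap at hgap
        linarith
    _ = 1 + l * y := exp_log hpos
end

section
/- De la Peña's supermartingale under conditional symmetry: let (X_t)_{t≥1} be an adapted real-valued process that is conditionally symmetric, meaning that for every t ≥ 1 and every bounded measurable f : ℝ → ℝ, E[f(X_t) | 𝓕_{t−1}] = E[f(−X_t) | 𝓕_{t−1}] a.s. Then for every fixed λ ∈ ℝ, R_t := exp( λ Σ_{i=1}^t X_i − (λ²/2) Σ_{i=1}^t X_i² ), with R_0 := 1, is a test supermartingale with respect to (𝓕_t). -/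
/-!
With `g x = delaPenaFactor λ x = exp (λx - λ²x²/2)` we have
`R (t+1) = R t * g (X (t+1))`. Since `cosh y ≤ exp (y²/2)`,
`g x + g (-x) = 2 cosh (λx) exp (-λ²x²/2) ≤ 2`, and conditional symmetry turns this
into `E[g (X (t+1)) | ℱ t] ≤ 1`. Pulling the `ℱ t`-measurable factor `R t` out of the
conditional expectation gives `E[R (t+1) | ℱ t] ≤ R t`.
-/

open MeasureTheory

noncomputable def delaPenaFactor (lam x : ℝ) : ℝ :=
  Real.exp (lam * x - lam ^ 2 / 2 * x ^ 2)

namespace delaPenaFactor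

theorem abs_le (lam x : ℝ) : |delaPenaFactor lam x| ≤ Real.exp (1 / 2) := by
  rw [delaPenaFactor, abs_of_pos (Real.exp_pos _)]
  exact Real.exp_le_exp.2 (by nlinarith [sq_nonneg (lam * x - 1)])

theorem add_neg_le_two (lam x : ℝ) : delaPenaFactor lam x + delaPenaFactor lam (-x) ≤ 2 := by
  calc delaPenaFactor lam x + delaPenaFactor lam (-x)
      = (Real.exp (lam * x) + Real.exp (-(lam * x))) * Real.exp (-(lam * x) ^ 2 / 2) := by
        simp only [delaPenaFactor, add_mul, ← Real.exp_add]
        ring_nf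
    _ = 2 * Real.cosh (lam * x) * Real.exp (-(lam * x) ^ 2 / 2) := by rw [Real.cosh_eq]; ring
    _ ≤ 2 * Real.exp ((lam * x) ^ 2 / 2) * Real.exp (-(lam * x) ^ 2 / 2) := by
        gcongr
        exact Real.cosh_le_exp_half_sq _
    _ = 2 := by rw [mul_assoc, ← Real.exp_add]; ring_nf; simp

@[fun_prop]
theorem measurable (lam : ℝ) : Measurable (delaPenaFactor lam) := by
  unfold delaPenaFactor
  fun_prop

theorem integrable_comp {Ω : Type*} {m0 : MeasurableSpace Ω} {μ : Measure Ω}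
    [IsFiniteMeasure μ] (lam : ℝ) {Y : Ω → ℝ} (hY : AEMeasurable Y μ) :
    Integrable (fun ω => delaPenaFactor lam (Y ω)) μ :=
  Integrable.of_bound ((measurable lam).comp_aemeasurable hY).aestronglyMeasurable _
    (ae_of_all _ fun ω => abs_le lam (Y ω))

end delaPenaFactor

section

variable {Ω : Type*} {m m0 : MeasurableSpace Ω} {μ : Measure Ω}

theorem condExp_le_of_condExp_eq_of_add_le [IsFiniteMeasure μ] (hm : m ≤ m0) {Y Z : Ω → ℝ}
    (hY : Integrable Y μ) (hZ : Integrable Z μ) (hYZ : μ[Y|m] =ᵐ[μ] μ[Z|m]) {c : ℝ}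
    (hle : ∀ᵐ ω ∂μ, Y ω + Z ω ≤ 2 * c) :
    μ[Y|m] ≤ᵐ[μ] fun _ => c := by
  have hsum : μ[Y + Z|m] ≤ᵐ[μ] fun _ => 2 * c := by
    simpa only [condExp_const hm] using
      condExp_mono (m := m) (hY.add hZ) (integrable_const (2 * c)) hle
  filter_upwards [hYZ, condExp_add hY hZ m, hsum] with ω hYZω haddω hsumω
  simp only [haddω, Pi.add_apply] at hsumω
  linarith

variable {ℱ : Filtration ℕ m0} {R G : ℕ → Ω → ℝ}

theorem stronglyAdapted_of_succ_eq_mul (h0 : StronglyMeasurable[ℱ 0] (R 0))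
    (hG : ∀ t, StronglyMeasurable[ℱ (t + 1)] (G t)) (hrec : ∀ t, R (t + 1) = R t * G t) :
    StronglyAdapted ℱ R := by
  intro t
  induction t with
  | zero => exact h0
  | succ t ih => rw [hrec]; exact (ih.mono (ℱ.mono t.le_succ)).mul (hG t)

theorem integrable_of_succ_eq_mul (h0 : Integrable (R 0) μ)
    (hG : ∀ t, AEStronglyMeasurable (G t) μ) {C : ℝ} (hC : ∀ t, ∀ᵐ ω ∂μ, ‖G t ω‖ ≤ C)
    (hrec : ∀ t, R (t + 1) = R t * G t) (t : ℕ) :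
    Integrable (R t) μ := by
  induction t with
  | zero => exact h0
  | succ t ih => rw [hrec]; exact ih.mul_bdd (hG t) (hC t)

theorem supermartingale_of_succ_eq_mul [IsFiniteMeasure μ] (hR : StronglyAdapted ℱ R)
    (hR_nonneg : ∀ t, 0 ≤ᵐ[μ] R t) (hR_int : ∀ t, Integrable (R t) μ)
    (hG_int : ∀ t, Integrable (G t) μ) (hrec : ∀ t, R (t + 1) = R t * G t)
    (hG_le : ∀ t, μ[G t|ℱ t] ≤ᵐ[μ] 1) :
    Supermartingale R ℱ μ := by
  refine supermartingale_nat hR hR_int fun t => ?_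
  have hpull : μ[R t * G t|ℱ t] =ᵐ[μ] R t * μ[G t|ℱ t] :=
    condExp_mul_of_stronglyMeasurable_left (hR t) (hrec t ▸ hR_int (t + 1))
      (hG_int t)
  rw [hrec]
  filter_upwards [hpull, hG_le t, hR_nonneg t] with ω hpullω hGω hRω
  rw [hpullω]
  exact mul_le_of_le_one_right hRω hGω

end

/-- **De la Peña's supermartingale under conditional symmetry**: if each `X t`
(for `t ≥ 1`) is conditionally symmetric given `ℱ (t-1)`, then for every fixed
`λ`, `R t = exp (λ ∑_{i=1}^t X i - (λ²/2) ∑_{i=1}^t (X i)²)` is a test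
supermartingale. -/
theorem delaPena_conditional_symmetry_supermartingale
    {Ω : Type*} {m0 : MeasurableSpace Ω} {P : Measure Ω} [IsProbabilityMeasure P]
    {ℱ : Filtration ℕ m0}
    (X : ℕ → Ω → ℝ) (hX : ∀ t, 1 ≤ t → StronglyMeasurable[ℱ t] (X t))
    (hsymm : ∀ t, 1 ≤ t → ∀ f : ℝ → ℝ, Measurable f → (∃ C, ∀ x, |f x| ≤ C) →
      P[fun ω => f (X t ω)|ℱ (t-1)] =ᵐ[P] P[fun ω => f (-(X t ω))|ℱ (t-1)])
    (lam : ℝ) (R : ℕ → Ω → ℝ)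
    (hR : ∀ t ω, R t ω = Real.exp (lam * (∑ i ∈ Finset.Icc 1 t, X i ω)
        - lam^2/2 * ∑ i ∈ Finset.Icc 1 t, (X i ω)^2)) :
    Supermartingale R ℱ P ∧ (∀ t ω, 0 ≤ R t ω) ∧ (∀ ω, R 0 ω = 1) := by
  set G : ℕ → Ω → ℝ := fun t ω => delaPenaFactor lam (X (t + 1) ω)
  have hR0 : ∀ ω, R 0 ω = 1 := fun ω => by simp [hR]
  have hrec : ∀ t, R (t + 1) = R t * G t := fun t => funext fun ω => by
    simp only [hR, G, delaPenaFactor, Pi.mul_apply, ← Real.exp_add,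
      Finset.sum_Icc_succ_top (Nat.le_add_left 1 t)]
    ring_nf
  have hXmeas : ∀ t, Measurable[ℱ (t + 1)] (X (t + 1)) := fun t =>
    (hX _ le_add_self).measurable
  have hXae : ∀ t, AEMeasurable (X (t + 1)) P := fun t =>
    ((hXmeas t).mono (ℱ.le _) le_rfl).aemeasurable
  have hG_int : ∀ t, Integrable (G t) P := fun t => delaPenaFactor.integrable_comp lam (hXae t)
  have hR_adapted : StronglyAdapted ℱ R :=
    stronglyAdapted_of_succ_eq_mul (by rw [funext hR0]; exact stronglyMeasurable_const)
      (fun t => ((delaPenaFactor.measurable lam).comp (hXmeas t)).stronglyMeasurable) hrec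
  have hR_int : ∀ t, Integrable (R t) P :=
    integrable_of_succ_eq_mul (by rw [funext hR0]; exact integrable_const _)
      (fun t => (hG_int t).aestronglyMeasurable)
      (fun t => ae_of_all _ fun ω => delaPenaFactor.abs_le lam _) hrec
  have hR_nonneg : ∀ t ω, 0 ≤ R t ω := fun t ω => by rw [hR]; exact (Real.exp_pos _).le
  have hG_le : ∀ t, P[G t|ℱ t] ≤ᵐ[P] 1 := fun t =>
    condExp_le_of_condExp_eq_of_add_le (ℱ.le t) (hG_int t)
      (delaPenaFactor.integrable_comp lam (hXae t).neg)
      (hsymm (t + 1) le_add_self _ (delaPenaFactor.measurable lam)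
        ⟨_, delaPenaFactor.abs_le lam⟩)
      (ae_of_all _ fun ω => (mul_one (2 : ℝ)).symm ▸ delaPenaFactor.add_neg_le_two lam _)
  exact ⟨supermartingale_of_succ_eq_mul hR_adapted (fun t => ae_of_all _ (hR_nonneg t)) hR_int
    hG_int hrec hG_le, hR_nonneg, hR0⟩
end

section
/- Odd predictable bets give test martingales under conditional symmetry: for each t ≥ 1 let f_t : Ω × ℝ → ℝ be 𝓕_{t−1} ⊗ Borel-measurable, bounded, with f_t(ω, −x) = −f_t(ω, x) for all ω, x (odd in x) and 1 + f_t(ω, x) ≥ 0 for all ω, x. Let (X_t)_{t≥1} be an adapted real-valued process that is conditionally symmetric, meaning that for every t ≥ 1 and every bounded measurable g : ℝ → ℝ, E[g(X_t) | 𝓕_{t−1}] = E[g(−X_t) | 𝓕_{t−1}] a.s. Then M_t := Π_{i=1}^t (1 + f_i(·, X_i)), with M_0 := 1, is a test martingale with respect to (𝓕_t). -/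
open MeasureTheory Filter

/-!
Write `Y ω = X (t+1) ω`. Since `M (t+1) = M t * (1 + f (t+1) ω (Y ω))` with `M t` integrable and
`ℱ t`-measurable and the bet `f (t+1) ω (Y ω)` bounded, it suffices that the bet has conditional
expectation zero given `ℱ t`. Conditional symmetry makes `(ω, Y ω)` and `(ω, -Y ω)` agree on
rectangles `A × B` with `A ∈ ℱ t`, hence have the same law on `ℱ t ⊗ Borel`. So for `A ∈ ℱ t` the
integral of `f (t+1) ω (Y ω)` over `A` equals that of `f (t+1) ω (-Y ω) = -f (t+1) ω (Y ω)`, and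
therefore vanishes.
-/

theorem Measurable.uncurry_comp_of_le {Ω β γ : Type*} {m m' : MeasurableSpace Ω}
    [MeasurableSpace β] [MeasurableSpace γ] {F : Ω → β → γ} {X : Ω → β}
    (hF : Measurable[m.prod inferInstance] (Function.uncurry F)) (hm : m ≤ m')
    (hX : Measurable[m'] X) : Measurable[m'] fun ω => F ω (X ω) :=
  (hF.mono (sup_le_sup (MeasurableSpace.comap_mono hm) le_rfl) le_rfl).comp
    (measurable_id.prodMk hX)

section ConditionalLaw

variable {Ω α β : Type*} {𝔾 m0 : MeasurableSpace Ω} {P : Measure Ω} [MeasurableSpace β]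
  {X Y : Ω → β}

theorem measure_inter_preimage_eq_of_condExp_comp_eq [IsFiniteMeasure P] (h𝔾 : 𝔾 ≤ m0)
    (hX : Measurable X) (hY : Measurable Y)
    (hXY : ∀ g : β → ℝ, Measurable g → (∃ C, ∀ x, |g x| ≤ C) →
      P[fun ω => g (X ω)|𝔾] =ᵐ[P] P[fun ω => g (Y ω)|𝔾])
    {A : Set Ω} (hA : MeasurableSet[𝔾] A) {B : Set β} (hB : MeasurableSet B) :
    P (A ∩ X ⁻¹' B) = P (A ∩ Y ⁻¹' B) := by
  have hg : Measurable (B.indicator (1 : β → ℝ)) := measurable_one.indicator hB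
  have hg_bdd : ∀ x, |B.indicator (1 : β → ℝ) x| ≤ 1 := fun x => by
    by_cases hx : x ∈ B <;> simp [hx]
  have hint : ∀ Z : Ω → β, Measurable Z → Integrable (fun ω => B.indicator 1 (Z ω)) P :=
    fun Z hZ => .of_bound (hg.comp hZ).aestronglyMeasurable 1 (ae_of_all _ fun ω => hg_bdd _)
  have hset : ∀ Z : Ω → β, Measurable Z →
      ∫ ω in A, B.indicator 1 (Z ω) ∂P = P.real (A ∩ Z ⁻¹' B) := fun Z hZ => by
    have hZB : (fun ω => B.indicator (1 : β → ℝ) (Z ω)) = (Z ⁻¹' B).indicator 1 :=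
      funext fun ω => (Set.indicator_comp_right Z (g := 1)).symm
    rw [hZB, integral_indicator_one (hZ hB), measureReal_restrict_apply (hZ hB), Set.inter_comm]
  rw [← measureReal_eq_measureReal_iff, ← hset X hX, ← hset Y hY,
    ← setIntegral_condExp h𝔾 (hint X hX) hA, ← setIntegral_condExp h𝔾 (hint Y hY) hA]
  exact setIntegral_congr_ae (h𝔾 A hA)
    (by filter_upwards [hXY _ hg ⟨1, hg_bdd⟩] with ω h _ using h)

theorem integral_comp_prodMk_eq_of_measure_inter_preimage_eq [IsFiniteMeasure P]
    {mα : MeasurableSpace α} {π : Ω → α} (hπ : Measurable π) (hX : Measurable X)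
    (hY : Measurable Y)
    (hXY : ∀ A, MeasurableSet A → ∀ B, MeasurableSet B →
      P (π ⁻¹' A ∩ X ⁻¹' B) = P (π ⁻¹' A ∩ Y ⁻¹' B))
    {F : α × β → ℝ} (hF : Measurable F) :
    ∫ ω, F (π ω, X ω) ∂P = ∫ ω, F (π ω, Y ω) ∂P := by
  have hlaw : P.map (fun ω => (π ω, X ω)) = P.map (fun ω => (π ω, Y ω)) :=
    Measure.ext_prod fun hA hB => by
      rw [Measure.map_apply (hπ.prodMk hX) (hA.prod hB),
        Measure.map_apply (hπ.prodMk hY) (hA.prod hB)]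
      exact hXY _ hA _ hB
  rw [← integral_map (hπ.prodMk hX).aemeasurable hF.aestronglyMeasurable, hlaw,
    integral_map (hπ.prodMk hY).aemeasurable hF.aestronglyMeasurable]

end ConditionalLaw

theorem condExp_odd_comp_eq_zero {Ω : Type*} {𝔾 m0 : MeasurableSpace Ω} {P : Measure Ω}
    [IsFiniteMeasure P] (h𝔾 : 𝔾 ≤ m0) {X : Ω → ℝ} (hX : Measurable X)
    (hsymm : ∀ g : ℝ → ℝ, Measurable g → (∃ C, ∀ x, |g x| ≤ C) →
      P[fun ω => g (X ω)|𝔾] =ᵐ[P] P[fun ω => g (-(X ω))|𝔾])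
    {F : Ω → ℝ → ℝ} (hFm : Measurable[𝔾.prod inferInstance] (Function.uncurry F))
    (hFb : ∃ C, ∀ ω x, |F ω x| ≤ C) (hFodd : ∀ ω x, F ω (-x) = -F ω x) :
    P[fun ω => F ω (X ω)|𝔾] =ᵐ[P] 0 := by
  obtain ⟨C, hC⟩ := hFb
  have hint : Integrable (fun ω => F ω (X ω)) P :=
    .of_bound (hFm.uncurry_comp_of_le h𝔾 hX).aestronglyMeasurable C
      (ae_of_all _ fun ω => hC ω (X ω))
  have hset : ∀ s, MeasurableSet[𝔾] s → ∫ ω in s, F ω (X ω) ∂P = 0 := by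
    intro s hs
    have hG := hFm.indicator (hs.prod MeasurableSet.univ)
    -- `id : (Ω, m0) → (Ω, 𝔾)` puts the joint law of `(ω, X ω)` on `𝔾 ⊗ Borel`.
    have hflip := integral_comp_prodMk_eq_of_measure_inter_preimage_eq (mα := 𝔾) (π := id)
      (measurable_id'' h𝔾) hX hX.neg
      (fun A hA B hB => measure_inter_preimage_eq_of_condExp_comp_eq h𝔾 hX hX.neg hsymm hA hB)
      hG
    have hsec : ∀ Z : Ω → ℝ,
        (fun ω => (s ×ˢ Set.univ).indicator (Function.uncurry F) (id ω, Z ω)) =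
          s.indicator fun ω => F ω (Z ω) := fun Z => funext fun ω => by
      by_cases hω : ω ∈ s <;> simp [hω]
    rw [hsec, hsec, integral_indicator (h𝔾 s hs), integral_indicator (h𝔾 s hs)] at hflip
    simp only [Pi.neg_apply, hFodd, integral_neg] at hflip
    linarith
  exact (ae_eq_condExp_of_forall_setIntegral_eq h𝔾 hint (fun _ _ _ => integrableOn_zero)
    (fun s hs _ => by simp [hset s hs]) aestronglyMeasurable_const).symm

theorem martingale_of_succ_eq_mul_one_add {Ω : Type*} {m0 : MeasurableSpace Ω} {P : Measure Ω}
    [IsFiniteMeasure P] {ℱ : Filtration ℕ m0} {M D : ℕ → Ω → ℝ}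
    (hM : StronglyAdapted ℱ M) (hM0 : Integrable (M 0) P)
    (hDm : ∀ t, AEStronglyMeasurable (D (t + 1)) P) (hDb : ∀ t, ∃ C, ∀ ω, |D (t + 1) ω| ≤ C)
    (hstep : ∀ t, M (t + 1) = M t * (1 + D (t + 1)))
    (hD : ∀ t, P[D (t + 1)|ℱ t] =ᵐ[P] 0) : Martingale M ℱ P := by
  have hDint : ∀ t, Integrable (D (t + 1)) P := fun t =>
    let ⟨C, hC⟩ := hDb t; .of_bound (hDm t) C (ae_of_all _ hC)
  have hint : ∀ t, Integrable (M t) P := by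
    intro t
    induction t with
    | zero => exact hM0
    | succ t ih =>
      obtain ⟨C, hC⟩ := hDb t
      rw [hstep]
      exact ih.mul_bdd (aestronglyMeasurable_const.add (hDm t)) (c := 1 + C)
        (ae_of_all _ fun ω => (norm_add_le _ _).trans (by simpa using hC ω))
  have hone : Integrable (1 : Ω → ℝ) P := integrable_const 1
  refine martingale_nat hM hint fun t => ?_
  have hone_add : P[1 + D (t + 1)|ℱ t] =ᵐ[P] 1 := by
    filter_upwards [condExp_add hone (hDint t) (ℱ t), hD t] with ω h h0
    rw [h, Pi.add_apply, h0, Pi.zero_apply, add_zero]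
    exact congrFun (condExp_const (ℱ.le t) 1) ω
  filter_upwards [condExp_mul_of_stronglyMeasurable_left (hM t) (hstep t ▸ hint (t + 1))
    (hone.add (hDint t)), hone_add] with ω h h1
  rw [hstep, h, Pi.mul_apply, h1, Pi.one_apply, mul_one]

/-- **Odd predictable bets give test martingales under conditional symmetry**: if
each `f t : Ω × ℝ → ℝ` is `ℱ (t-1) ⊗ Borel`-measurable, bounded, odd in its real
argument and satisfies `1 + f t ω x ≥ 0`, and each `X t` is conditionally
symmetric given `ℱ (t-1)`, then `M t = ∏_{i=1}^t (1 + f i (ω, X i ω))` is a test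
martingale. -/
theorem odd_predictable_bets_test_martingale
    {Ω : Type*} {m0 : MeasurableSpace Ω} {P : Measure Ω} [IsProbabilityMeasure P]
    {ℱ : Filtration ℕ m0}
    (f : ℕ → Ω → ℝ → ℝ)
    (hfm : ∀ t, 1 ≤ t →
      Measurable[MeasurableSpace.prod (ℱ (t-1)) inferInstance] (Function.uncurry (f t)))
    (hfb : ∀ t, 1 ≤ t → ∃ C, ∀ ω x, |f t ω x| ≤ C)
    (hodd : ∀ t, 1 ≤ t → ∀ ω x, f t ω (-x) = -(f t ω x))
    (hnn : ∀ t, 1 ≤ t → ∀ ω x, 0 ≤ 1 + f t ω x)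
    (X : ℕ → Ω → ℝ) (hX : ∀ t, 1 ≤ t → StronglyMeasurable[ℱ t] (X t))
    (hsymm : ∀ t, 1 ≤ t → ∀ g : ℝ → ℝ, Measurable g → (∃ C, ∀ x, |g x| ≤ C) →
      P[fun ω => g (X t ω)|ℱ (t-1)] =ᵐ[P] P[fun ω => g (-(X t ω))|ℱ (t-1)])
    (M : ℕ → Ω → ℝ)
    (hM : ∀ t ω, M t ω = ∏ i ∈ Finset.Icc 1 t, (1 + f i ω (X i ω))) :
    Martingale M ℱ P ∧ (∀ t ω, 0 ≤ M t ω) ∧ (∀ ω, M 0 ω = 1) := by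
  set D : ℕ → Ω → ℝ := fun t ω => f t ω (X t ω)
  have hD : ∀ i t, 1 ≤ i → i ≤ t → Measurable[ℱ t] (D i) := fun i t hi hit =>
    (hfm i hi).uncurry_comp_of_le (ℱ.mono (i.sub_le 1 |>.trans hit))
      ((hX i hi).measurable.mono (ℱ.mono hit) le_rfl)
  have hadapted : StronglyAdapted ℱ M := fun t => by
    rw [funext (hM t)]
    refine (Finset.measurable_prod _ fun i hi => ?_).stronglyMeasurable
    exact measurable_const.add (hD i t (Finset.mem_Icc.1 hi).1 (Finset.mem_Icc.1 hi).2)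
  have hstep : ∀ t, M (t + 1) = M t * (1 + D (t + 1)) := fun t => funext fun ω => by
    simp only [hM, Finset.prod_Icc_succ_top (Nat.le_add_left 1 t), Pi.mul_apply, Pi.add_apply,
      Pi.one_apply, D]
  have hXm : ∀ t, 1 ≤ t → Measurable (X t) := fun t ht =>
    (hX t ht).measurable.mono (ℱ.le t) le_rfl
  have hM0 : ∀ ω, M 0 ω = 1 := fun ω => by simp [hM]
  refine ⟨martingale_of_succ_eq_mul_one_add hadapted ?_ (fun t => ?_) (fun t => ?_) hstep
    (fun t => ?_), fun t ω => ?_, hM0⟩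
  · simp [funext hM0]
  · exact ((hD _ _ le_add_self le_rfl).mono (ℱ.le _) le_rfl).aestronglyMeasurable
  · obtain ⟨C, hC⟩ := hfb (t + 1) le_add_self
    exact ⟨C, fun ω => hC ω _⟩
  · exact condExp_odd_comp_eq_zero (ℱ.le t) (hXm _ le_add_self)
      (by simpa using hsymm (t + 1) le_add_self) (by simpa using hfm (t + 1) le_add_self)
      (hfb (t + 1) le_add_self) (hodd (t + 1) le_add_self)
  · rw [hM]
    exact Finset.prod_nonneg fun i hi => hnn i (Finset.mem_Icc.1 hi).1 ω (X i ω)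
end

section
/- FDR control of the e-BH procedure under arbitrary dependence (Wang–Ramdas): let e_1, …, e_K be nonnegative random variables on a probability space (with arbitrary joint dependence), let N ⊆ {1,…,K} be the (deterministic) set of indices with E[e_i] ≤ 1 for all i ∈ N, and let α ∈ (0,1). Define k* := max{ k ∈ {1,…,K} : #{ i : e_i ≥ K/(kα) } ≥ k } (setting k* := 0 and R := ∅ if no such k exists), and let R := { i : e_i ≥ K/(k*α) } be the rejection set. Then E[ |R ∩ N| / max(|R|, 1) ] ≤ α·|N|/K ≤ α. -/
open MeasureTheory Finset
open scoped ENNReal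

/-!
Every index `i` rejected by e-BH satisfies `e i ≥ K / (k* α)` with `k* ≤ |R|`, so
`1 / |R| ≤ α e i / K`: the rejection set is *self-consistent*. Summing over `R ∩ N` bounds the
false discovery proportion pointwise by `∑_{i ∈ N} α e i / K`, a quantity that is linear in the
e-values. Its expectation is therefore at most `α |N| / K` whatever the dependence between them.
-/

theorem Finset.sup_id_mem_of_ne_zero {s : Finset ℕ} (h : s.sup id ≠ 0) : s.sup id ∈ s := by
  have hs : s.Nonempty := nonempty_of_ne_empty (by rintro rfl; simp at h)
  obtain ⟨k, hk, hsup⟩ := s.exists_mem_eq_sup hs id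
  exact hsup ▸ hk

theorem card_inter_div_le_sum_of_self_consistent {ι : Type*} [DecidableEq ι] (R N : Finset ι)
    (w : ι → ℝ) (hw : ∀ i ∈ N, 0 ≤ w i) (hR : ∀ i ∈ R, 1 ≤ #R * w i) :
    (#(R ∩ N) : ℝ) / max (#R : ℝ) 1 ≤ ∑ i ∈ N, w i := by
  rcases R.eq_empty_or_nonempty with rfl | hne
  · simpa using sum_nonneg hw
  have hcard : (0 : ℝ) < #R := by exact_mod_cast hne.card_pos
  rw [max_eq_left (by exact_mod_cast hne.card_pos)]
  calc (#(R ∩ N) : ℝ) / #R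
      = ∑ _i ∈ R ∩ N, 1 / (#R : ℝ) := by rw [sum_const, nsmul_eq_mul, mul_one_div]
    _ ≤ ∑ i ∈ R ∩ N, w i :=
        sum_le_sum fun i hi => (div_le_iff₀' hcard).2 (hR i (mem_inter.1 hi).1)
    _ ≤ ∑ i ∈ N, w i :=
        sum_le_sum_of_subset_of_nonneg inter_subset_right fun i hi _ => hw i hi

theorem one_le_card_mul_of_mem_eBH {ι : Type*} [Fintype ι] {e : ι → ℝ} {K α : ℝ}
    (hK : 0 < K) (hα : 0 < α) {k : ℕ} (hk : 0 < k)
    (hkcard : k ≤ #{i | K / (k * α) ≤ e i}) {i : ι} (hi : K / (k * α) ≤ e i) :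
    1 ≤ #{i | K / (k * α) ≤ e i} * (α / K * e i) := by
  have hk' : (0 : ℝ) < k := by exact_mod_cast hk
  have hei : 0 ≤ e i := (by positivity : 0 ≤ K / (k * α)).trans hi
  calc (1 : ℝ) = k * (α / K * (K / (k * α))) := by field_simp
    _ ≤ k * (α / K * e i) := by gcongr
    _ ≤ #{i | K / (k * α) ≤ e i} * (α / K * e i) := by gcongr

section EValues

variable {Ω : Type*} [MeasurableSpace Ω] {P : Measure Ω} {f : Ω → ℝ}

theorem integrable_of_lintegral_ofReal_le_one (hf : Measurable f) (hf0 : ∀ ω, 0 ≤ f ω)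
    (h : ∫⁻ ω, ENNReal.ofReal (f ω) ∂P ≤ 1) : Integrable f P :=
  ⟨hf.aestronglyMeasurable, (hasFiniteIntegral_iff_ofReal (ae_of_all _ hf0)).2
    (h.trans_lt ENNReal.one_lt_top)⟩

theorem integral_le_one_of_lintegral_ofReal_le_one (hf : Measurable f) (hf0 : ∀ ω, 0 ≤ f ω)
    (h : ∫⁻ ω, ENNReal.ofReal (f ω) ∂P ≤ 1) : ∫ ω, f ω ∂P ≤ 1 := by
  rw [integral_eq_lintegral_of_nonneg_ae (ae_of_all _ hf0) hf.aestronglyMeasurable]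
  exact ENNReal.toReal_le_of_le_ofReal zero_le_one (by simpa using h)

theorem integral_fdp_le_of_self_consistent {ι : Type*} [DecidableEq ι] (e : ι → Ω → ℝ)
    (hmeas : ∀ i, Measurable (e i)) (henn : ∀ i ω, 0 ≤ e i ω) (N : Finset ι)
    (hN : ∀ i ∈ N, ∫⁻ ω, ENNReal.ofReal (e i ω) ∂P ≤ 1) {c : ℝ} (hc : 0 ≤ c)
    (R : Ω → Finset ι) (hR : ∀ ω, ∀ i ∈ R ω, 1 ≤ #(R ω) * (c * e i ω)) :
    ∫ ω, (#(R ω ∩ N) : ℝ) / max (#(R ω) : ℝ) 1 ∂P ≤ c * #N := by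
  have hint : ∀ i ∈ N, Integrable (fun ω => c * e i ω) P := fun i hi =>
    (integrable_of_lintegral_ofReal_le_one (hmeas i) (henn i) (hN i hi)).const_mul c
  calc ∫ ω, (#(R ω ∩ N) : ℝ) / max (#(R ω) : ℝ) 1 ∂P
      ≤ ∫ ω, ∑ i ∈ N, c * e i ω ∂P :=
        integral_mono_of_nonneg (ae_of_all _ fun ω => by positivity)
          (integrable_finsetSum N hint) (ae_of_all _ fun ω =>
            card_inter_div_le_sum_of_self_consistent (R ω) N _
              (fun i _ => mul_nonneg hc (henn i ω)) (hR ω))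
    _ = ∑ i ∈ N, c * ∫ ω, e i ω ∂P := by
        rw [integral_finsetSum N hint]
        simp only [integral_const_mul]
    _ ≤ ∑ _i ∈ N, c * 1 := sum_le_sum fun i hi => mul_le_mul_of_nonneg_left
        (integral_le_one_of_lintegral_ofReal_le_one (hmeas i) (henn i) (hN i hi)) hc
    _ = c * #N := by rw [sum_const, nsmul_eq_mul, mul_one, mul_comm]

end EValues

theorem eBH_FDR_control_general
    {Ω : Type*} [MeasurableSpace Ω] (P : Measure Ω)
    (K : ℕ)
    (e : Fin K → Ω → ℝ) (hmeas : ∀ i, Measurable (e i)) (henn : ∀ i ω, 0 ≤ e i ω)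
    (N : Finset (Fin K))
    (hN : ∀ i ∈ N, ∫⁻ ω, ENNReal.ofReal (e i ω) ∂P ≤ 1)
    {α : ℝ} (hα : α ∈ Set.Ioo (0:ℝ) 1)
    (kstar : Ω → ℕ)
    (hkstar : ∀ ω, kstar ω = ((Finset.Icc 1 K).filter
        (fun k : ℕ => k ≤ (Finset.univ.filter
          (fun i : Fin K => (K : ℝ) / ((k : ℝ) * α) ≤ e i ω)).card)).sup id)
    (R : Ω → Finset (Fin K))
    (hR : ∀ ω, R ω = if kstar ω = 0 then (∅ : Finset (Fin K))
        else Finset.univ.filter (fun i : Fin K => (K : ℝ) / ((kstar ω : ℝ) * α) ≤ e i ω)) :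
    (∫ ω, ((R ω ∩ N).card : ℝ) / max ((R ω).card : ℝ) 1 ∂P ≤ α * N.card / K)
      ∧ α * (N.card : ℝ) / K ≤ α := by
  obtain ⟨hα0, -⟩ := hα
  have hself : ∀ ω, ∀ i ∈ R ω, 1 ≤ #(R ω) * (α / K * e i ω) := by
    intro ω i hi
    rw [hR ω] at hi ⊢
    split_ifs at hi ⊢ with h0
    · simp at hi
    have hk : kstar ω ∈ (Icc 1 K).filter
        (fun k : ℕ => k ≤ #{i | (K : ℝ) / ((k : ℝ) * α) ≤ e i ω}) := by
      rw [hkstar ω] at h0 ⊢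
      exact sup_id_mem_of_ne_zero h0
    rw [mem_filter, mem_Icc] at hk
    exact one_le_card_mul_of_mem_eBH (by exact_mod_cast i.pos) hα0 hk.1.1 hk.2 (mem_filter.1 hi).2
  refine ⟨?_, ?_⟩
  · simpa [div_mul_eq_mul_div] using
      integral_fdp_le_of_self_consistent e hmeas henn N hN (by positivity) R hself
  · exact div_le_of_le_mul₀ (Nat.cast_nonneg K) hα0.le
      (mul_le_mul_of_nonneg_left (by simpa using N.card_le_univ) hα0.le)

/-- **FDR control of the e-BH procedure under arbitrary dependence** (Wang–Ramdas):
with e-values `e i` that have expectation at most one for indices in the null set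
`N`, the e-BH rejection set `R` (built from `k* = max {k : #{i : e i ≥ K/(kα)} ≥ k}`)
has false discovery rate at most `α |N| / K ≤ α`. -/
theorem eBH_FDR_control
    {Ω : Type*} [MeasurableSpace Ω] (P : Measure Ω) [IsProbabilityMeasure P]
    (K : ℕ) (hK : 1 ≤ K)
    (e : Fin K → Ω → ℝ) (hmeas : ∀ i, Measurable (e i)) (henn : ∀ i ω, 0 ≤ e i ω)
    (N : Finset (Fin K))
    (hN : ∀ i ∈ N, ∫⁻ ω, ENNReal.ofReal (e i ω) ∂P ≤ 1)
    {α : ℝ} (hα : α ∈ Set.Ioo (0:ℝ) 1)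
    (kstar : Ω → ℕ)
    (hkstar : ∀ ω, kstar ω = ((Finset.Icc 1 K).filter
        (fun k : ℕ => k ≤ (Finset.univ.filter
          (fun i : Fin K => (K : ℝ) / ((k : ℝ) * α) ≤ e i ω)).card)).sup id)
    (R : Ω → Finset (Fin K))
    (hR : ∀ ω, R ω = if kstar ω = 0 then (∅ : Finset (Fin K))
        else Finset.univ.filter (fun i : Fin K => (K : ℝ) / ((kstar ω : ℝ) * α) ≤ e i ω)) :
    (∫ ω, ((R ω ∩ N).card : ℝ) / max ((R ω).card : ℝ) 1 ∂P ≤ α * N.card / K)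
      ∧ α * (N.card : ℝ) / K ≤ α :=
  eBH_FDR_control_general P K e hmeas henn N hN hα kstar hkstar R hR
end

section
/- FCR control of the e-BY procedure for arbitrary selection rules (Xu et al.): let e_1, …, e_K be nonnegative random variables with E[e_i] ≤ 1 for every i in a deterministic set N ⊆ {1,…,K}, let α ∈ (0,1), and let S be an arbitrary random subset of {1,…,K} (measurable, possibly depending on all the data in any way). Then E[ #{ i ∈ S ∩ N : e_i ≥ K/(α·|S|) } / max(|S|, 1) ] ≤ α·|N|/K ≤ α. -/
open MeasureTheory
open scoped ENNReal

/-!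
Let `T ⊆ S ∩ N` be the selected null indices whose e-value reaches `K / (α |S|)`. Each of them
satisfies `1 ≤ α |S| e_i⁺ / K`, so the selected proportion `|T| / |S|` is bounded pointwise by
`(α / K) ∑_{i ∈ N} e_i⁺`, whatever the selection `S`. Integrating, and using `E[e_i⁺] ≤ 1`
for `i ∈ N`, gives the bound `α |N| / K`.
-/

open Finset

theorem one_le_div_mul_posPart_of_div_le {α c K x : ℝ} (hα : 0 < α) (hc : 0 < c) (hK : 0 < K)
    (hx : K / (α * c) ≤ x) : 1 ≤ α * c / K * x⁺ := by
  have hαc : 0 < α * c := mul_pos hα hc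
  rw [div_mul_eq_mul_div, le_div_iff₀ hK, one_mul]
  calc K ≤ x * (α * c) := (div_le_iff₀ hαc).mp hx
    _ ≤ α * c * x⁺ := by rw [mul_comm]; gcongr; exact le_posPart x

theorem card_filter_div_le_sum_posPart {ι : Type*} [DecidableEq ι] (S N : Finset ι) (e : ι → ℝ)
    {α K : ℝ} (hα : 0 < α) (hK : 0 < K) :
    (#((S ∩ N).filter fun i => K / (α * #S) ≤ e i) : ℝ) / max (#S : ℝ) 1
      ≤ α / K * ∑ i ∈ N, (e i)⁺ := by
  set T := (S ∩ N).filter fun i => K / (α * #S) ≤ e i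
  set c : ℝ := max (#S : ℝ) 1
  have hc : 0 < c := lt_max_of_lt_right one_pos
  have hTN : T ⊆ N := fun i hi => (mem_inter.mp (mem_filter.mp hi).1).2
  have hT : ∀ i ∈ T, 1 ≤ α * c / K * (e i)⁺ := by
    intro i hi
    obtain ⟨hiSN, hthreshold⟩ := mem_filter.mp hi
    have hS : (1 : ℝ) ≤ #S := by
      exact_mod_cast card_pos.mpr ⟨i, (mem_inter.mp hiSN).1⟩
    rw [show c = #S from max_eq_left hS]
    exact one_le_div_mul_posPart_of_div_le hα (one_pos.trans_le hS) hK hthreshold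
  rw [div_le_iff₀ hc]
  calc (#T : ℝ) = ∑ _i ∈ T, (1 : ℝ) := by simp
    _ ≤ ∑ i ∈ T, α * c / K * (e i)⁺ := sum_le_sum hT
    _ ≤ ∑ i ∈ N, α * c / K * (e i)⁺ :=
        sum_le_sum_of_subset_of_nonneg hTN fun i _ _ => by positivity
    _ = α / K * (∑ i ∈ N, (e i)⁺) * c := by rw [← mul_sum]; ring

section

variable {Ω ι : Type*} [MeasurableSpace Ω]

theorem Measurable.of_measurableSet_fibers {β γ : Type*} [Countable β] [MeasurableSpace γ]
    {S : Ω → β} (hS : ∀ b, MeasurableSet {ω | S ω = b}) {F : β → Ω → γ}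
    (hF : ∀ b, Measurable (F b)) : Measurable fun ω => F (S ω) ω := by
  intro t ht
  have : (fun ω => F (S ω) ω) ⁻¹' t = ⋃ b, {ω | S ω = b} ∩ F b ⁻¹' t := by
    ext ω
    simp
  rw [this]
  exact .iUnion fun b => (hS b).inter (hF b ht)

theorem measurable_card_filter (s : Finset ι) {p : ι → Ω → Prop} [∀ i ω, Decidable (p i ω)]
    (hp : ∀ i, MeasurableSet {ω | p i ω}) :
    Measurable fun ω => (#(s.filter fun i => p i ω) : ℝ) := by
  simp only [card_filter, Nat.cast_sum, Nat.cast_ite, Nat.cast_one, Nat.cast_zero]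
  exact measurable_sum _ fun i _ => Measurable.ite (hp i) measurable_const measurable_const

theorem integral_le_mul_card_of_le_sum_posPart {μ : Measure Ω} {f : Ω → ℝ} {g : ι → Ω → ℝ}
    {N : Finset ι} {a : ℝ} (ha : 0 ≤ a) (hf0 : ∀ ω, 0 ≤ f ω)
    (hf : AEStronglyMeasurable f μ) (hg : ∀ i ∈ N, AEMeasurable (g i) μ)
    (hgN : ∀ i ∈ N, ∫⁻ ω, ENNReal.ofReal (g i ω) ∂μ ≤ 1)
    (hfg : ∀ ω, f ω ≤ a * ∑ i ∈ N, (g i ω)⁺) :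
    ∫ ω, f ω ∂μ ≤ a * #N := by
  rw [integral_eq_lintegral_of_nonneg_ae (ae_of_all _ hf0) hf]
  refine ENNReal.toReal_le_of_le_ofReal (by positivity) ?_
  calc ∫⁻ ω, ENNReal.ofReal (f ω) ∂μ
      ≤ ∫⁻ ω, ENNReal.ofReal a * ∑ i ∈ N, ENNReal.ofReal (g i ω) ∂μ := by
        refine lintegral_mono fun ω => (ENNReal.ofReal_le_ofReal (hfg ω)).trans_eq ?_
        rw [ENNReal.ofReal_mul ha, ENNReal.ofReal_sum_of_nonneg fun i _ => posPart_nonneg _]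
        simp [posPart_def]
    _ = ENNReal.ofReal a * ∑ i ∈ N, ∫⁻ ω, ENNReal.ofReal (g i ω) ∂μ := by
        rw [lintegral_const_mul' _ _ ENNReal.ofReal_ne_top,
          lintegral_finsetSum' _ fun i hi => (hg i hi).ennreal_ofReal]
    _ ≤ ENNReal.ofReal a * #N := by
        gcongr
        simpa using sum_le_sum hgN
    _ = ENNReal.ofReal (a * #N) := by rw [ENNReal.ofReal_mul ha, ENNReal.ofReal_natCast]

end

theorem eBY_FCR_control_general
    {Ω : Type*} [MeasurableSpace Ω] (P : Measure Ω)
    (K : ℕ) (hK : 1 ≤ K)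
    (e : Fin K → Ω → ℝ) (hmeas : ∀ i, Measurable (e i))
    (N : Finset (Fin K))
    (hN : ∀ i ∈ N, ∫⁻ ω, ENNReal.ofReal (e i ω) ∂P ≤ 1)
    {α : ℝ} (hα : α ∈ Set.Ioo (0:ℝ) 1)
    (S : Ω → Finset (Fin K))
    (hS : ∀ s : Finset (Fin K), MeasurableSet {ω | S ω = s}) :
    (∫ ω, ((((S ω) ∩ N).filter
          (fun i => (K : ℝ) / (α * ((S ω).card : ℝ)) ≤ e i ω)).card : ℝ)
        / max ((S ω).card : ℝ) 1 ∂P ≤ α * N.card / K)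
      ∧ α * (N.card : ℝ) / K ≤ α := by
  have hKpos : (0 : ℝ) < K := by exact_mod_cast hK
  refine ⟨?_, ?_⟩
  · let ratio : Finset (Fin K) → Ω → ℝ := fun s ω =>
      #((s ∩ N).filter fun i => (K : ℝ) / (α * #s) ≤ e i ω) / max (#s : ℝ) 1
    have hratio : Measurable fun ω => ratio (S ω) ω := .of_measurableSet_fibers hS fun s =>
      (measurable_card_filter _ fun i => measurableSet_le measurable_const (hmeas i)).div_const _
    rw [mul_div_right_comm]
    exact integral_le_mul_card_of_le_sum_posPart (f := fun ω => ratio (S ω) ω) (g := e)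
      (div_pos hα.1 hKpos).le (fun ω => by positivity) hratio.aestronglyMeasurable
      (fun i _ => (hmeas i).aemeasurable) hN
      fun ω => card_filter_div_le_sum_posPart _ _ _ hα.1 hKpos
  · exact div_le_of_le_mul₀ hKpos.le hα.1.le
      (mul_le_mul_of_nonneg_left (by exact_mod_cast card_finset_fin_le N) hα.1.le)

/-- **FCR control of the e-BY procedure for arbitrary selection rules** (Xu et al.):
with e-values `e i` having expectation at most one for indices in the null set `N`,
and an arbitrary (measurable) random selection `S ⊆ {1,…,K}`, the expected
proportion of selected null indices with `e i ≥ K/(α |S|)` among the selected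
indices is at most `α |N| / K ≤ α`. -/
theorem eBY_FCR_control
    {Ω : Type*} [MeasurableSpace Ω] (P : Measure Ω) [IsProbabilityMeasure P]
    (K : ℕ) (hK : 1 ≤ K)
    (e : Fin K → Ω → ℝ) (hmeas : ∀ i, Measurable (e i)) (henn : ∀ i ω, 0 ≤ e i ω)
    (N : Finset (Fin K))
    (hN : ∀ i ∈ N, ∫⁻ ω, ENNReal.ofReal (e i ω) ∂P ≤ 1)
    {α : ℝ} (hα : α ∈ Set.Ioo (0:ℝ) 1)
    (S : Ω → Finset (Fin K))
    (hS : ∀ s : Finset (Fin K), MeasurableSet {ω | S ω = s}) :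
    (∫ ω, ((((S ω) ∩ N).filter
          (fun i => (K : ℝ) / (α * ((S ω).card : ℝ)) ≤ e i ω)).card : ℝ)
        / max ((S ω).card : ℝ) 1 ∂P ≤ α * N.card / K)
      ∧ α * (N.card : ℝ) / K ≤ α :=
  eBY_FCR_control_general P K hK e hmeas N hN hα S hS
end

section
/- Calibrators turn p-values into e-values: let f : [0,1] → [0,∞] be nonincreasing with ∫₀¹ f(x) dx ≤ 1, and let p be a random variable taking values in [0,1] with P(p ≤ u) ≤ u for every u ∈ [0,1]. Then E[f(p)] ≤ 1. -/
open MeasureTheory Set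
open scoped ENNReal

/-!
Extend `f` to an antitone function on `ℝ`. By the layer-cake formula, both `E[f(p)]` and
`∫₀¹ f` are integrals over `t > 0` of the mass of the superlevel sets `{f > t}`, which are
lower sets. The law of a p-value gives a lower set `s` at most its Lebesgue measure in `[0, 1]`:
with `u` the supremum of `s ∩ [0, 1]`, that set lies between `[0, u)` and `(-∞, u]`.
-/

theorem Real.volume_restrict_Ioi_setOf_ofReal_lt (r : ℝ≥0∞) :
    volume.restrict (Ioi 0) {t : ℝ | ENNReal.ofReal t < r} = r := by
  rw [Measure.restrict_apply' measurableSet_Ioi]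
  rcases eq_or_ne r ∞ with rfl | hr
  · simp
  · have : {t : ℝ | ENNReal.ofReal t < r} ∩ Ioi 0 = Ioo 0 r.toReal := by
      ext t
      simp only [mem_inter_iff, mem_ofPred_eq, mem_Ioi, mem_Ioo]
      rw [and_comm]
      exact and_congr_right fun ht => ENNReal.ofReal_lt_iff_lt_toReal ht.le hr
    rw [this, Real.volume_Ioo, sub_zero, ENNReal.ofReal_toReal hr]

theorem lintegral_eq_lintegral_meas_ofReal_lt {α : Type*} [MeasurableSpace α]
    (μ : Measure α) [SFinite μ] {g : α → ℝ≥0∞} (hg : Measurable g) :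
    ∫⁻ a, g a ∂μ = ∫⁻ t in Ioi (0 : ℝ), μ {a | ENNReal.ofReal t < g a} := by
  have hE : MeasurableSet {q : α × ℝ | ENNReal.ofReal q.2 < g q.1} :=
    measurableSet_lt measurable_snd.ennreal_ofReal (hg.comp measurable_fst)
  have h := (Measure.prod_apply hE (μ := μ) (ν := volume.restrict (Ioi 0))).symm.trans
    (Measure.prod_apply_symm hE)
  simpa only [preimage_ofPred_eq, Real.volume_restrict_Ioi_setOf_ofReal_lt] using h

theorem lintegral_le_lintegral_of_antitone {α : Type*} [Preorder α] [MeasurableSpace α]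
    {μ ν : Measure α} [SFinite μ] [SFinite ν]
    (hμν : ∀ s, IsLowerSet s → MeasurableSet s → μ s ≤ ν s)
    {g : α → ℝ≥0∞} (hg : Antitone g) (hgm : Measurable g) :
    ∫⁻ a, g a ∂μ ≤ ∫⁻ a, g a ∂ν := by
  rw [lintegral_eq_lintegral_meas_ofReal_lt μ hgm, lintegral_eq_lintegral_meas_ofReal_lt ν hgm]
  exact lintegral_mono fun t => hμν _ (fun a b hba ha => ha.trans_le (hg hba))
    (measurableSet_lt measurable_const hgm)

theorem measure_le_volume_Icc_of_isLowerSet {μ : Measure ℝ}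
    (hμ : ∀ᵐ x ∂μ, x ∈ Icc (0 : ℝ) 1)
    (hcdf : ∀ u ∈ Icc (0 : ℝ) 1, μ (Iic u) ≤ ENNReal.ofReal u)
    {s : Set ℝ} (hs : IsLowerSet s) :
    μ s ≤ volume.restrict (Icc 0 1) s := by
  rw [← measure_inter_conull (ae_iff.1 hμ), Measure.restrict_apply' measurableSet_Icc]
  set A := s ∩ Icc (0 : ℝ) 1
  rcases A.eq_empty_or_nonempty with hA | hA
  · simp [hA]
  have hAbdd : BddAbove A := ⟨1, fun x hx => hx.2.2⟩
  have hu : sSup A ∈ Icc (0 : ℝ) 1 :=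
    ⟨hA.some_mem.2.1.trans (le_csSup hAbdd hA.some_mem), csSup_le hA fun x hx => hx.2.2⟩
  have hIco : Ico 0 (sSup A) ⊆ A := fun x hx => by
    obtain ⟨y, hy, hxy⟩ := exists_lt_of_lt_csSup hA hx.2
    exact ⟨hs hxy.le hy.1, hx.1, hxy.le.trans hy.2.2⟩
  calc μ A ≤ μ (Iic (sSup A)) := measure_mono fun x hx => le_csSup hAbdd hx
    _ ≤ ENNReal.ofReal (sSup A) := hcdf _ hu
    _ = volume (Ico 0 (sSup A)) := by rw [Real.volume_Ico, sub_zero]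
    _ ≤ volume A := measure_mono hIco

/-- **Calibrators turn p-values into e-values**: if `f : [0,1] → [0,∞]` is
nonincreasing with `∫₀¹ f ≤ 1`, and `p` is a p-value (a `[0,1]`-valued random
variable with `P(p ≤ u) ≤ u` for all `u ∈ [0,1]`), then `E[f(p)] ≤ 1`. -/
theorem calibrator_gives_evalue
    {Ω : Type*} [MeasurableSpace Ω] (P : Measure Ω) [IsProbabilityMeasure P]
    (f : ℝ → ℝ≥0∞) (hf : AntitoneOn f (Set.Icc (0:ℝ) 1))
    (hf1 : ∫⁻ x in Set.Icc (0:ℝ) 1, f x ≤ 1)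
    (p : Ω → ℝ) (hp : Measurable p) (hp01 : ∀ ω, p ω ∈ Set.Icc (0:ℝ) 1)
    (hpv : ∀ u ∈ Set.Icc (0:ℝ) 1, P {ω | p ω ≤ u} ≤ ENNReal.ofReal u) :
    ∫⁻ ω, f (p ω) ∂P ≤ 1 := by
  set g : ℝ → ℝ≥0∞ := fun x => f (projIcc 0 1 zero_le_one x)
  have hg : Antitone g := fun x y hxy =>
    hf (projIcc 0 1 _ x).2 (projIcc 0 1 _ y).2 (monotone_projIcc _ hxy)
  have hgf : ∀ x ∈ Icc (0 : ℝ) 1, g x = f x := fun x hx => by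
    simp only [g, projIcc_of_mem _ hx]
  have hsupp : ∀ᵐ x ∂P.map p, x ∈ Icc (0 : ℝ) 1 :=
    (ae_map_iff hp.aemeasurable measurableSet_Icc).2 (ae_of_all _ hp01)
  have hcdf : ∀ u ∈ Icc (0 : ℝ) 1, P.map p (Iic u) ≤ ENNReal.ofReal u := fun u hu => by
    rw [Measure.map_apply hp measurableSet_Iic]
    exact hpv u hu
  have hlaw : ∀ s, IsLowerSet s → MeasurableSet s →
      P.map p s ≤ volume.restrict (Icc 0 1) s := fun _ hs _ =>
    measure_le_volume_Icc_of_isLowerSet hsupp hcdf hs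
  calc ∫⁻ ω, f (p ω) ∂P = ∫⁻ x, g x ∂P.map p := by
        rw [lintegral_map hg.measurable hp]
        exact lintegral_congr fun ω => (hgf _ (hp01 ω)).symm
    _ ≤ ∫⁻ x in Icc 0 1, g x := lintegral_le_lintegral_of_antitone hlaw hg hg.measurable
    _ = ∫⁻ x in Icc 0 1, f x := setLIntegral_congr_fun measurableSet_Icc hgf
    _ ≤ 1 := hf1
end

section
/- Sums of consecutively started test supermartingales form an e-detector (Shin–Ramdas–Rinaldo): for each i ≥ 1, let (A^{(i)}_t)_{t ≥ i} be a nonnegative process adapted to (𝓕_t) such that E[A^{(i)}_i | 𝓕_{i−1}] ≤ 1 a.s. and E[A^{(i)}_{t+1} | 𝓕_t] ≤ A^{(i)}_t a.s. for all t ≥ i. Define M_t := Σ_{i=1}^t A^{(i)}_t for t ≥ 1 and M_0 := 0. Then for every stopping time τ with respect to (𝓕_t) (possibly infinite, with M_∞ := lim inf_{t→∞} M_t on {τ = ∞}), E[M_τ] ≤ E[τ]. -/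
open MeasureTheory Filter
open scoped ENNReal

/-!
Writing `M_t = ∑_{i ≤ t} A^{(i)}_t`, the supermartingale property of the summands already
present and the bound `E[A^{(t+1)}_{t+1} | 𝓕_t] ≤ 1` on the newly started one give
`E[M_{t+1} | 𝓕_t] ≤ M_t + 1`, i.e. `M_t - t` is a supermartingale. Optional stopping at the
bounded times `τ ∧ t` yields `E[M_{τ ∧ t}] ≤ E[τ ∧ t] ≤ E[τ]`, and Fatou's lemma lets `t → ∞`.
-/

theorem ENNReal.ofReal_liminf_le {ι : Type*} {l : Filter ι} {x : ι → ℝ}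
    (hx : IsBoundedUnder (· ≥ ·) l x) :
    ENNReal.ofReal (liminf x l) ≤ liminf (fun n => ENNReal.ofReal (x n)) l := by
  refine (le_liminf_iff ..).2 fun b hb => ?_
  have hb_top : b ≠ ⊤ := ne_top_of_lt (hb.trans ENNReal.ofReal_lt_top)
  filter_upwards [eventually_lt_of_lt_liminf ((ENNReal.lt_ofReal_iff_toReal_lt hb_top).mp hb) hx]
    with n hn
  exact (ENNReal.lt_ofReal_iff_toReal_lt hb_top).mpr hn

namespace MeasureTheory

variable {Ω : Type*} {m0 : MeasurableSpace Ω} {P : Measure Ω} {ℱ : Filtration ℕ m0}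

theorem stoppedProcess_apply_zero {β : Type*} (u : ℕ → Ω → β) (τ : Ω → ℕ∞) :
    stoppedProcess u τ 0 = u 0 :=
  funext fun _ => stoppedProcess_eq_of_le bot_le

theorem Supermartingale.integral_stoppedProcess_le [IsFiniteMeasure P] {f : ℕ → Ω → ℝ}
    (hf : Supermartingale f ℱ P) {τ : Ω → ℕ∞} (hτ : IsStoppingTime ℱ τ) (t : ℕ) :
    ∫ ω, stoppedProcess f τ t ω ∂P ≤ ∫ ω, f 0 ω ∂P := by
  have h := (hf.neg.stoppedProcess hτ).setIntegral_le (Nat.zero_le t) MeasurableSet.univ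
  simp only [setIntegral_univ, stoppedProcess_apply_zero] at h
  change ∫ ω, - f 0 ω ∂P ≤ ∫ ω, - stoppedProcess f τ t ω ∂P at h
  rwa [integral_neg, integral_neg, neg_le_neg_iff] at h

theorem supermartingale_sub_natCast_of_condExp_le_add_one [IsFiniteMeasure P] {M : ℕ → Ω → ℝ}
    (hadp : StronglyAdapted ℱ M) (hint : ∀ t, Integrable (M t) P)
    (hcond : ∀ t, P[M (t + 1)|ℱ t] ≤ᵐ[P] fun ω => M t ω + 1) :
    Supermartingale (fun t ω => M t ω - t) ℱ P := by
  refine supermartingale_nat (fun t => (hadp t).sub stronglyMeasurable_const)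
    (fun t => (hint t).sub (integrable_const _)) fun t => ?_
  have hsub : (fun ω => M (t + 1) ω - ((t + 1 : ℕ) : ℝ)) = M (t + 1) - fun _ => ((t : ℝ) + 1) := by
    ext ω; push_cast; rfl
  filter_upwards [condExp_sub (hint (t + 1)) (integrable_const ((t : ℝ) + 1)) (ℱ t), hcond t]
    with ω hce hle
  rw [hsub, hce, Pi.sub_apply, condExp_const (ℱ.le t)]
  linarith

theorem lintegral_ofReal_stoppedProcess_le [IsFiniteMeasure P] {M : ℕ → Ω → ℝ}
    (hM : Supermartingale (fun t ω => M t ω - t) ℱ P) (hM0 : M 0 = 0) (hnn : ∀ t, 0 ≤ᵐ[P] M t)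
    {τ : Ω → ℕ∞} (hτ : IsStoppingTime ℱ τ) (t : ℕ) :
    ∫⁻ ω, ENNReal.ofReal (stoppedProcess M τ t ω) ∂P ≤ ∫⁻ ω, (τ ω : ℝ≥0∞) ∂P := by
  set N : Ω → ℝ := stoppedProcess (fun (s : ℕ) _ => (s : ℝ)) τ t
  have hN : Integrable N P := integrable_stoppedProcess hτ (fun _ => integrable_const _) t
  have hf := integrable_stoppedProcess hτ hM.integrable t
  have hMN : ∀ ω, stoppedProcess M τ t ω = stoppedProcess (fun t ω => M t ω - t) τ t ω + N ω :=
    fun ω => by simp [N, stoppedProcess]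
  have hint : Integrable (stoppedProcess M τ t) P :=
    (hf.add hN).congr (ae_of_all _ fun ω => (hMN ω).symm)
  have hle : ∫ ω, stoppedProcess M τ t ω ∂P ≤ ∫ ω, N ω ∂P := by
    have h := hM.integral_stoppedProcess_le hτ t
    simp only [hM0, Pi.zero_apply, CharP.cast_eq_zero, sub_zero, integral_zero] at h
    simp only [hMN, integral_add hf hN]
    linarith
  have hN_le : ∀ ω, ENNReal.ofReal (N ω) ≤ τ ω := fun ω => by
    simp only [N, stoppedProcess, ENNReal.ofReal_natCast]
    cases τ ω with
    | top => simp
    | coe k =>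
      simp only [ENat.some_eq_natCast, ENat.toENNReal_coe, Nat.cast_le]
      exact (WithTop.untopA_le_iff ((min_le_left _ _).trans_lt (WithTop.coe_lt_top t)).ne).2
        (min_le_right _ _)
  calc ∫⁻ ω, ENNReal.ofReal (stoppedProcess M τ t ω) ∂P
      = ENNReal.ofReal (∫ ω, stoppedProcess M τ t ω ∂P) := by
        refine (ofReal_integral_eq_lintegral_ofReal hint ?_).symm
        filter_upwards [ae_all_iff.2 hnn] with ω hω using hω _
    _ ≤ ENNReal.ofReal (∫ ω, N ω ∂P) := ENNReal.ofReal_le_ofReal hle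
    _ = ∫⁻ ω, ENNReal.ofReal (N ω) ∂P :=
        ofReal_integral_eq_lintegral_ofReal hN (ae_of_all _ fun ω => Nat.cast_nonneg _)
    _ ≤ ∫⁻ ω, (τ ω : ℝ≥0∞) ∂P := lintegral_mono hN_le

/-- `M_τ` in `ℝ≥0∞`, with the convention `M_∞ := liminf_t M_t` on `{τ = ∞}`. -/
noncomputable def stoppedValueLiminf (M : ℕ → Ω → ℝ) (τ : Ω → ℕ∞) (ω : Ω) : ℝ≥0∞ :=
  if τ ω = ⊤ then ENNReal.ofReal (liminf (fun t => M t ω) atTop)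
  else ENNReal.ofReal (M (τ ω).toNat ω)

theorem stoppedValueLiminf_le_liminf_stoppedProcess {M : ℕ → Ω → ℝ} {τ : Ω → ℕ∞} {ω : Ω}
    (hM : ∀ t, 0 ≤ M t ω) :
    stoppedValueLiminf M τ ω ≤ liminf (fun t => ENNReal.ofReal (stoppedProcess M τ t ω)) atTop := by
  rw [stoppedValueLiminf]
  split_ifs with hτ
  · simp_rw [stoppedProcess_eq_of_le (hτ ▸ le_top : _ ≤ τ ω)]
    exact ENNReal.ofReal_liminf_le (isBoundedUnder_of ⟨0, hM⟩)
  · obtain ⟨k, hk⟩ := WithTop.ne_top_iff_exists.mp hτ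
    have hconst : ∀ᶠ t in atTop,
        ENNReal.ofReal (stoppedProcess M τ t ω) = ENNReal.ofReal (M k ω) := by
      filter_upwards [eventually_ge_atTop k] with t ht
      have hτt : τ ω ≤ (t : WithTop ℕ) := hk ▸ WithTop.coe_le_coe.mpr ht
      rw [stoppedProcess_eq_of_ge (i := t) hτt, ← hk]
      rfl
    rw [liminf_congr hconst, liminf_const, ← hk]
    rfl

theorem lintegral_stoppedValueLiminf_le [IsFiniteMeasure P] {M : ℕ → Ω → ℝ}
    (hadp : StronglyAdapted ℱ M) (hint : ∀ t, Integrable (M t) P)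
    (hcond : ∀ t, P[M (t + 1)|ℱ t] ≤ᵐ[P] fun ω => M t ω + 1) (hM0 : M 0 = 0)
    (hnn : ∀ t, 0 ≤ᵐ[P] M t) {τ : Ω → ℕ∞} (hτ : IsStoppingTime ℱ τ) :
    ∫⁻ ω, stoppedValueLiminf M τ ω ∂P ≤ ∫⁻ ω, (τ ω : ℝ≥0∞) ∂P := by
  have hM := supermartingale_sub_natCast_of_condExp_le_add_one hadp hint hcond
  calc ∫⁻ ω, stoppedValueLiminf M τ ω ∂P
      ≤ ∫⁻ ω, liminf (fun t => ENNReal.ofReal (stoppedProcess M τ t ω)) atTop ∂P := by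
        refine lintegral_mono_ae ?_
        filter_upwards [ae_all_iff.2 hnn] with ω hω
        exact stoppedValueLiminf_le_liminf_stoppedProcess hω
    _ ≤ liminf (fun t => ∫⁻ ω, ENNReal.ofReal (stoppedProcess M τ t ω) ∂P) atTop :=
        lintegral_liminf_le fun t =>
          (hadp.stronglyMeasurable_stoppedProcess_of_discrete hτ t).measurable.ennreal_ofReal
    _ ≤ ∫⁻ ω, (τ ω : ℝ≥0∞) ∂P :=
        liminf_le_of_frequently_le (Frequently.of_forall fun t =>
          lintegral_ofReal_stoppedProcess_le hM hM0 hnn hτ t)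

theorem condExp_sum_Icc_succ_le {A : ℕ → ℕ → Ω → ℝ}
    (hint : ∀ i t, 1 ≤ i → i ≤ t → Integrable (A i t) P)
    (hinit : ∀ i, 1 ≤ i → P[A i i|ℱ (i-1)] ≤ᵐ[P] fun _ => 1)
    (hsuper : ∀ i t, 1 ≤ i → i ≤ t → P[A i (t+1)|ℱ t] ≤ᵐ[P] A i t) (t : ℕ) :
    P[fun ω => ∑ i ∈ Finset.Icc 1 (t + 1), A i (t + 1) ω|ℱ t]
      ≤ᵐ[P] fun ω => ∑ i ∈ Finset.Icc 1 t, A i t ω + 1 := by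
  have hsum : (fun ω => ∑ i ∈ Finset.Icc 1 (t + 1), A i (t + 1) ω)
      = ∑ i ∈ Finset.Icc 1 (t + 1), A i (t + 1) := by
    ext ω; simp
  have hold : ∀ᵐ ω ∂P, ∀ i ∈ Finset.Icc 1 t, P[A i (t + 1)|ℱ t] ω ≤ A i t ω :=
    (eventually_all_finset _).2 fun i hi =>
      hsuper i t (Finset.mem_Icc.1 hi).1 (Finset.mem_Icc.1 hi).2
  have hnew : P[A (t + 1) (t + 1)|ℱ t] ≤ᵐ[P] fun _ => 1 := by
    simpa using hinit (t + 1) (Nat.le_add_left 1 t)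
  rw [hsum]
  filter_upwards [condExp_finsetSum (fun i hi => hint i (t + 1) (Finset.mem_Icc.1 hi).1
    (Finset.mem_Icc.1 hi).2) (ℱ t), hold, hnew] with ω hce hle_old hle_new
  rw [hce, Finset.sum_apply, Finset.sum_Icc_succ_top (Nat.le_add_left 1 t)]
  exact add_le_add (Finset.sum_le_sum hle_old) hle_new

end MeasureTheory

/-- **Sums of consecutively started test supermartingales form an e-detector**
(Shin–Ramdas–Rinaldo): if for each `i ≥ 1` the process `(A i t)_{t ≥ i}` is
nonnegative, adapted, with `E[A i i | ℱ (i-1)] ≤ 1` and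
`E[A i (t+1) | ℱ t] ≤ A i t` for `t ≥ i`, then `M t = ∑_{i=1}^t A i t`
satisfies `E[M_τ] ≤ E[τ]` for every (possibly infinite) stopping time `τ`. -/
theorem edetector_sum_of_supermartingales
    {Ω : Type*} {m0 : MeasurableSpace Ω} {P : Measure Ω} [IsProbabilityMeasure P]
    {ℱ : Filtration ℕ m0}
    (A : ℕ → ℕ → Ω → ℝ)
    (hadp : ∀ i t, 1 ≤ i → i ≤ t → StronglyMeasurable[ℱ t] (A i t))
    (hnn : ∀ i t, 1 ≤ i → i ≤ t → 0 ≤ᵐ[P] A i t)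
    (hint : ∀ i t, 1 ≤ i → i ≤ t → Integrable (A i t) P)
    (hinit : ∀ i, 1 ≤ i → P[A i i|ℱ (i-1)] ≤ᵐ[P] fun _ => 1)
    (hsuper : ∀ i t, 1 ≤ i → i ≤ t → P[A i (t+1)|ℱ t] ≤ᵐ[P] A i t)
    (M : ℕ → Ω → ℝ)
    (hM : ∀ t ω, M t ω = ∑ i ∈ Finset.Icc 1 t, A i t ω)
    (τ : Ω → ℕ∞)
    (hτ : ∀ t : ℕ, MeasurableSet[ℱ t] {ω | τ ω ≤ (t : ℕ∞)}) :
    ∫⁻ ω, (if τ ω = ⊤ then ENNReal.ofReal (Filter.liminf (fun t => M t ω) Filter.atTop)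
           else ENNReal.ofReal (M (τ ω).toNat ω)) ∂P
      ≤ ∫⁻ ω, (τ ω : ℝ≥0∞) ∂P := by
  obtain rfl : M = fun t ω => ∑ i ∈ Finset.Icc 1 t, A i t ω := funext fun t => funext (hM t)
  refine lintegral_stoppedValueLiminf_le (fun t => ?_) (fun t => ?_)
    (condExp_sum_Icc_succ_le hint hinit hsuper) (by ext; simp) (fun t => ?_) hτ
  · exact Finset.stronglyMeasurable_fun_sum _ fun i hi =>
      hadp i t (Finset.mem_Icc.1 hi).1 (Finset.mem_Icc.1 hi).2
  · exact integrable_finsetSum _ fun i hi =>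
      hint i t (Finset.mem_Icc.1 hi).1 (Finset.mem_Icc.1 hi).2
  · filter_upwards [(eventually_all_finset _).2 fun i hi =>
      hnn i t (Finset.mem_Icc.1 hi).1 (Finset.mem_Icc.1 hi).2] with ω hω
    exact Finset.sum_nonneg hω
end

section
/- The Turner–Ly–Grünwald two-sample block e-variable: let (𝒴, 𝓑, ν) be a measurable space with a σ-finite measure ν, let p_a, p_b and p be probability densities with respect to ν, and let n_a, n_b ≥ 1 be integers. Let Y_1, …, Y_{n_a}, Z_1, …, Z_{n_b} be independent random elements of 𝒴 each with density p (the null: both groups have the same distribution). Define the mixture density p̄ := (n_a·p_a + n_b·p_b)/(n_a + n_b) and S := [ Π_{i=1}^{n_a} p_a(Y_i) · Π_{j=1}^{n_b} p_b(Z_j) ] / [ Π_{i=1}^{n_a} p̄(Y_i) · Π_{j=1}^{n_b} p̄(Z_j) ], with the convention that the ratio is 0 whenever the denominator is 0. Then E[S] ≤ 1; that is, S is an e-variable for the null hypothesis of equal distributions, for every choice of the common density p. -/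
/-!
Put `a := ∫ pa / p̄ dμ` and `b := ∫ pb / p̄ dμ`. Since `p̄` is the mixture, pointwise
`na · pa / p̄ + nb · pb / p̄ ≤ na + nb`, so `na · a + nb · b ≤ na + nb` for every probability
measure `μ`. The block statistic is at most the product of the single-observation ratios, whose
integral under the product measure is `a ^ na * b ^ nb` by independence of the coordinates, and
weighted AM–GM (from `x ≤ exp (x - 1)`) bounds this by `1`.
-/

open MeasureTheory ProbabilityTheory
open scoped ENNReal

theorem Real.pow_mul_pow_le_one_of_mul_add_mul_le {m n : ℕ} {a b : ℝ} (ha : 0 ≤ a) (hb : 0 ≤ b)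
    (h : m * a + n * b ≤ m + n) : a ^ m * b ^ n ≤ 1 := by
  have hexp (x : ℝ) : x ≤ exp (x - 1) := by linarith [add_one_le_exp (x - 1)]
  calc a ^ m * b ^ n ≤ exp (a - 1) ^ m * exp (b - 1) ^ n := by gcongr <;> apply hexp
    _ = exp (m * a + n * b - (m + n)) := by
      rw [← exp_nat_mul, ← exp_nat_mul, ← exp_add]; ring_nf
    _ ≤ 1 := exp_le_one_iff.2 (by linarith)

namespace ENNReal

theorem pow_ne_top_of_natCast_mul_ne_top {m : ℕ} {a : ℝ≥0∞} (h : m * a ≠ ∞) : a ^ m ≠ ∞ := by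
  simp_all [mul_eq_top]
  tauto

theorem pow_mul_pow_le_one_of_mul_add_mul_le {m n : ℕ} {a b : ℝ≥0∞}
    (h : m * a + n * b ≤ m + n) : a ^ m * b ^ n ≤ 1 := by
  have hfin : (m : ℝ≥0∞) * a + n * b ≠ ∞ := ne_top_of_le_ne_top (by simp) h
  have hma : (m : ℝ≥0∞) * a ≠ ∞ := by simp_all
  have hnb : (n : ℝ≥0∞) * b ≠ ∞ := by simp_all
  rw [← ofReal_toReal (mul_ne_top (pow_ne_top_of_natCast_mul_ne_top hma)
    (pow_ne_top_of_natCast_mul_ne_top hnb)), ofReal_le_one, toReal_mul, toReal_pow, toReal_pow]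
  refine Real.pow_mul_pow_le_one_of_mul_add_mul_le toReal_nonneg toReal_nonneg ?_
  have := toReal_mono (by simp) h
  rwa [toReal_add hma hnb, toReal_mul, toReal_mul, toReal_add (by simp) (by simp)] at this

theorem div_div_le (c d : ℝ≥0∞) : c / (c / d) ≤ d := by
  -- the degenerate cases hold by the junk values `x / 0 = ∞` (for `x ≠ 0`) and `∞ / ∞ = 0`
  rcases eq_or_ne d ∞ with rfl | hd_top
  · exact le_top
  rcases eq_or_ne d 0 with rfl | hd0
  · rcases eq_or_ne c 0 with rfl | hc0
    · simp
    · simp [div_zero hc0]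
  exact div_le_of_le_mul (by rw [ENNReal.mul_div_cancel hd0 hd_top])

theorem mul_div_mixture_add_mul_div_mixture_le (s t x y : ℝ≥0∞) :
    s * (x / ((s * x + t * y) / (s + t))) + t * (y / ((s * x + t * y) / (s + t))) ≤ s + t := by
  simp only [← mul_div_assoc, ENNReal.div_add_div_same]
  exact div_div_le _ _

theorem prod_div_prod_le_prod_div {ι : Type*} (s : Finset ι) {a b : ι → ℝ≥0∞}
    (hab : ∀ i ∈ s, b i = 0 → a i = 0) : (∏ i ∈ s, a i) / ∏ i ∈ s, b i ≤ ∏ i ∈ s, a i / b i := by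
  by_cases hb : ∃ i ∈ s, b i = 0
  · obtain ⟨i, hi, hbi⟩ := hb
    simp [Finset.prod_eq_zero hi (hab i hi hbi)]
  · simp only [not_exists, not_and] at hb
    exact (prod_div_distrib fun i hi _ _ _ => Or.inl (hb i hi)).ge

end ENNReal

section Product

variable {Y : Type*} [MeasurableSpace Y] (μ : Measure Y) [IsProbabilityMeasure μ]

theorem lintegral_pi_prod_eq_pow {ι : Type*} [Fintype ι] {f : Y → ℝ≥0∞} (hf : Measurable f) :
    ∫⁻ x : ι → Y, ∏ i, f (x i) ∂(Measure.pi fun _ => μ) = (∫⁻ y, f y ∂μ) ^ Fintype.card ι := by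
  refine (lintegral_prod_eq_prod_lintegral_of_indepFun Finset.univ (fun i (x : ι → Y) => f (x i))
    (iIndepFun_pi fun _ => hf.aemeasurable) fun i => hf.comp (measurable_pi_apply i)).trans ?_
  simp [(measurePreserving_eval (fun _ => μ) _).lintegral_comp hf]

theorem lintegral_pi_prod_pi_prod_eq {m n : ℕ} {f g : Y → ℝ≥0∞} (hf : Measurable f)
    (hg : Measurable g) :
    ∫⁻ w : (Fin m → Y) × (Fin n → Y), (∏ i, f (w.1 i)) * ∏ j, g (w.2 j)
      ∂((Measure.pi fun _ => μ).prod (Measure.pi fun _ => μ))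
      = (∫⁻ y, f y ∂μ) ^ m * (∫⁻ y, g y ∂μ) ^ n := by
  rw [lintegral_prod_mul (f := fun x : Fin m → Y => ∏ i, f (x i))
    (g := fun x : Fin n → Y => ∏ j, g (x j))
    (Finset.measurable_prod _ fun i _ => hf.comp (measurable_pi_apply i)).aemeasurable
    (Finset.measurable_prod _ fun j _ => hg.comp (measurable_pi_apply j)).aemeasurable,
    lintegral_pi_prod_eq_pow μ hf, lintegral_pi_prod_eq_pow μ hg,
    Fintype.card_fin, Fintype.card_fin]

theorem mul_lintegral_add_mul_lintegral_le {s t : ℝ≥0∞} {f g : Y → ℝ≥0∞}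
    (h : ∀ y, s * f y + t * g y ≤ s + t) :
    s * ∫⁻ y, f y ∂μ + t * ∫⁻ y, g y ∂μ ≤ s + t :=
  calc _ ≤ ∫⁻ y, s * f y ∂μ + ∫⁻ y, t * g y ∂μ :=
        add_le_add (lintegral_const_mul_le _ _) (lintegral_const_mul_le _ _)
    _ ≤ ∫⁻ y, s * f y + t * g y ∂μ := le_lintegral_add _ _
    _ ≤ ∫⁻ _, s + t ∂μ := lintegral_mono h
    _ = s + t := by simp

end Product

theorem turner_two_sample_block_evariable_general
    {Y : Type*} [MeasurableSpace Y]
    (pa pb : Y → ℝ≥0∞)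
    (hpa : Measurable pa) (hpb : Measurable pb)
    (na nb : ℕ)
    (pbar : Y → ℝ≥0∞)
    (hpbar : ∀ y, pbar y = ((na : ℝ≥0∞) * pa y + (nb : ℝ≥0∞) * pb y) / ((na : ℝ≥0∞) + (nb : ℝ≥0∞)))
    (μ : Measure Y) [IsProbabilityMeasure μ] :
    ∫⁻ w : (Fin na → Y) × (Fin nb → Y),
        ((∏ i, pa (w.1 i)) * ∏ j, pb (w.2 j))
          / ((∏ i, pbar (w.1 i)) * ∏ j, pbar (w.2 j))
      ∂((Measure.pi fun _ : Fin na => μ).prod (Measure.pi fun _ : Fin nb => μ))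
      ≤ 1 := by
  have hpbar_meas : Measurable pbar := funext hpbar ▸ by fun_prop
  -- `p̄ y = 0` forces `pa y = 0` only if `na ≠ 0`, which an index `i : Fin na` witnesses
  have hnull {y : Y} (h : pbar y = 0) : (na : ℝ≥0∞) * pa y = 0 ∧ (nb : ℝ≥0∞) * pb y = 0 := by
    simpa [hpbar, ENNReal.div_eq_zero_iff] using h
  have hratio (w : (Fin na → Y) × (Fin nb → Y)) :
      ((∏ i, pa (w.1 i)) * ∏ j, pb (w.2 j)) / ((∏ i, pbar (w.1 i)) * ∏ j, pbar (w.2 j))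
        ≤ (∏ i, pa (w.1 i) / pbar (w.1 i)) * ∏ j, pb (w.2 j) / pbar (w.2 j) := by
    simpa [Fintype.prod_sum_type] using ENNReal.prod_div_prod_le_prod_div Finset.univ
      (a := Sum.elim (pa ∘ w.1) (pb ∘ w.2)) (b := Sum.elim (pbar ∘ w.1) (pbar ∘ w.2)) <| by
        rintro (i | j) - h
        · exact (mul_eq_zero.1 (hnull h).1).resolve_left (by simpa using i.pos.ne')
        · exact (mul_eq_zero.1 (hnull h).2).resolve_left (by simpa using j.pos.ne')
  have hweights : (na : ℝ≥0∞) * ∫⁻ y, pa y / pbar y ∂μ + nb * ∫⁻ y, pb y / pbar y ∂μ ≤ na + nb :=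
    mul_lintegral_add_mul_lintegral_le μ fun y => by
      rw [hpbar y]; exact ENNReal.mul_div_mixture_add_mul_div_mixture_le _ _ _ _
  calc _ ≤ _ := lintegral_mono hratio
    _ = _ := lintegral_pi_prod_pi_prod_eq μ (hpa.div hpbar_meas) (hpb.div hpbar_meas)
    _ ≤ 1 := ENNReal.pow_mul_pow_le_one_of_mul_add_mul_le hweights

/-- **The Turner–Ly–Grünwald two-sample block e-variable**: let `pa, pb, p` be
probability densities w.r.t. a σ-finite measure `ν`, let `p̄` be the mixture
density `(na·pa + nb·pb)/(na+nb)`, and let the `na + nb` observations of the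
block be i.i.d. with density `p` (the null of equal distributions, joint law a
product measure). Then the block statistic
`S = ∏ᵢ pa(Yᵢ) ∏ⱼ pb(Zⱼ) / (∏ᵢ p̄(Yᵢ) ∏ⱼ p̄(Zⱼ))` has expectation at most one,
i.e. it is an e-variable, whatever the common density `p` is. -/
theorem turner_two_sample_block_evariable
    {Y : Type*} [MeasurableSpace Y] (ν : Measure Y) [SigmaFinite ν]
    (pa pb p : Y → ℝ≥0∞)
    (hpa : Measurable pa) (hpb : Measurable pb) (hp : Measurable p)
    (hpa1 : ∫⁻ y, pa y ∂ν = 1) (hpb1 : ∫⁻ y, pb y ∂ν = 1) (hp1 : ∫⁻ y, p y ∂ν = 1)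
    (na nb : ℕ) (hna : 1 ≤ na) (hnb : 1 ≤ nb)
    (pbar : Y → ℝ≥0∞)
    (hpbar : ∀ y, pbar y = ((na : ℝ≥0∞) * pa y + (nb : ℝ≥0∞) * pb y) / ((na : ℝ≥0∞) + (nb : ℝ≥0∞)))
    (μ : Measure Y) [IsProbabilityMeasure μ] (hμ : μ = ν.withDensity p) :
    ∫⁻ w : (Fin na → Y) × (Fin nb → Y),
        ((∏ i, pa (w.1 i)) * ∏ j, pb (w.2 j))
          / ((∏ i, pbar (w.1 i)) * ∏ j, pbar (w.2 j))
      ∂((Measure.pi fun _ : Fin na => μ).prod (Measure.pi fun _ : Fin nb => μ))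
      ≤ 1 :=
  turner_two_sample_block_evariable_general pa pb hpa hpb na nb pbar hpbar μ
end
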